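/- arXiv:2509.16166 — 8 statements merged into one kernel-verified Lean document; each statement's English description precedes it below -/
import Mathlib

section
/- Let W be a subgroup of the orthogonal group of V such that w(Γ) = Γ for every w ∈ W, and assume indecomposability: there is no orthogonal direct sum decomposition V = V₁ ⊕ V₂ into two nonzero W-invariant linear subspaces such that Γ = (Γ ∩ V₁) + (Γ ∩ V₂). Then the set {±e₁, …, ±e_r} is invariant under every element of W, and all basis vectors have the same length: ‖e_i‖ = ‖e_j‖ for all i, j (i.e. the basis is cubic). -/
open scoped RealInnerProductSpace

/-- The set `{±e₁, …, ±e_r}`. -/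
def pmSet {V : Type*} [AddCommGroup V] {r : ℕ} (e : Fin r → V) : Set V :=
  {v | ∃ i, v = e i ∨ v = -e i}

private lemma sq_eq_of_nonneg {a b : ℝ} (ha : 0 ≤ a) (hb : 0 ≤ b) (h : a ^ 2 = b ^ 2) :
    a = b := by
  nlinarith [sq_nonneg (a - b), sq_nonneg (a + b)]

private lemma norm_sq_sum {V : Type*} [NormedAddCommGroup V] [InnerProductSpace ℝ V]
    {r : ℕ} (e : Fin r → V) (horth : ∀ i j, i ≠ j → ⟪e i, e j⟫ = 0) (n : Fin r → ℝ) :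
    ‖∑ i, n i • e i‖ ^ 2 = ∑ i, (n i) ^ 2 * ‖e i‖ ^ 2 := by
  rw [← real_inner_self_eq_norm_sq, sum_inner]
  refine Finset.sum_congr rfl fun i _ => ?_
  rw [inner_sum, Finset.sum_eq_single i]
  · rw [real_inner_smul_left, real_inner_smul_right, real_inner_self_eq_norm_sq]; ring
  · intro j _ hj
    rw [real_inner_smul_left, real_inner_smul_right, horth i j (Ne.symm hj)]
    ring
  · intro h; exact absurd (Finset.mem_univ i) h

private lemma mem_coords {V : Type*} [NormedAddCommGroup V] [InnerProductSpace ℝ V]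
    {r : ℕ} (e : Fin r → V) {Γ : AddSubgroup V}
    (hΓ : Γ = AddSubgroup.closure (Set.range e)) {x : V} (hx : x ∈ Γ) :
    ∃ n : Fin r → ℤ, x = ∑ i, ((n i : ℝ)) • e i := by
  subst hΓ
  have hle : AddSubgroup.closure (Set.range e)
      ≤ (Submodule.span ℤ (Set.range e)).toAddSubgroup :=
    (AddSubgroup.closure_le _).2 fun y hy => Submodule.subset_span hy
  have hx' : x ∈ Submodule.span ℤ (Set.range e) := hle hx
  obtain ⟨n, hn⟩ := (Submodule.mem_span_range_iff_exists_fun ℤ).1 hx'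
  refine ⟨n, ?_⟩
  rw [← hn]
  exact Finset.sum_congr rfl fun i _ => (Int.cast_smul_eq_zsmul ℝ (n i) (e i)).symm

theorem stmt0
    {V : Type*} [NormedAddCommGroup V] [InnerProductSpace ℝ V] [FiniteDimensional ℝ V]
    {r : ℕ} (hr : 1 ≤ r) (hdim : Module.finrank ℝ V = r)
    (e : Fin r → V) (he0 : ∀ i, e i ≠ 0)
    (horth : ∀ i j, i ≠ j → ⟪e i, e j⟫ = 0)
    (hspan : Submodule.span ℝ (Set.range e) = ⊤)
    (Γ : AddSubgroup V) (hΓ : Γ = AddSubgroup.closure (Set.range e))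
    (W : Subgroup (V ≃ₗᵢ[ℝ] V))
    (hWΓ : ∀ w ∈ W, ⇑w '' (Γ : Set V) = (Γ : Set V))
    (hindec : ¬ ∃ V₁ V₂ : Submodule ℝ V, V₁ ≠ ⊥ ∧ V₂ ≠ ⊥ ∧
      (∀ x ∈ V₁, ∀ y ∈ V₂, ⟪x, y⟫ = 0) ∧ V₁ ⊔ V₂ = ⊤ ∧
      (∀ w ∈ W, ∀ x ∈ V₁, w x ∈ V₁) ∧ (∀ w ∈ W, ∀ x ∈ V₂, w x ∈ V₂) ∧
      Γ = (Γ ⊓ V₁.toAddSubgroup) ⊔ (Γ ⊓ V₂.toAddSubgroup)) :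
    (∀ w ∈ W, ⇑w '' pmSet e = pmSet e) ∧ (∀ i j : Fin r, ‖e i‖ = ‖e j‖) := by
  have he0' : ∀ i, 0 < ‖e i‖ := fun i => norm_pos_iff.2 (he0 i)
  obtain ⟨i₀, -, hmin⟩ := Finset.exists_min_image Finset.univ (fun i => ‖e i‖)
    ⟨⟨0, hr⟩, Finset.mem_univ _⟩
  set m : ℝ := ‖e i₀‖ with hm
  have hm0 : 0 < m := he0' i₀
  have hmin' : ∀ j, m ≤ ‖e j‖ := fun j => hmin j (Finset.mem_univ j)
  have heΓ : ∀ i, e i ∈ Γ := fun i => hΓ ▸ AddSubgroup.subset_closure ⟨i, rfl⟩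
  -- Key lemma: a minimal-norm basis vector is sent to ± a minimal-norm basis vector.
  have keyA : ∀ w ∈ W, ∀ i, ‖e i‖ = m →
      ∃ j, ‖e j‖ = m ∧ (w (e i) = e j ∨ w (e i) = - e j) := by
    intro w hw i hi
    have hmem : w (e i) ∈ Γ := by
      have h : w (e i) ∈ ⇑w '' (Γ : Set V) := ⟨e i, heΓ i, rfl⟩
      rwa [hWΓ w hw] at h
    obtain ⟨n, hn⟩ := mem_coords e hΓ hmem
    have hwnorm : ‖w (e i)‖ = m := by rw [w.norm_map, hi]
    have hnorm : ∑ j, ((n j : ℝ)) ^ 2 * ‖e j‖ ^ 2 = m ^ 2 := by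
      rw [← norm_sq_sum e horth (fun j => ((n j : ℝ))), ← hn, hwnorm]
    obtain ⟨j, hj⟩ : ∃ j, n j ≠ 0 := by
      by_contra h
      push_neg at h
      have : w (e i) = 0 := by rw [hn]; simp [h]
      rw [this, norm_zero] at hwnorm
      linarith
    have hterm : ∀ k, (0:ℝ) ≤ ((n k : ℝ)) ^ 2 * ‖e k‖ ^ 2 :=
      fun k => mul_nonneg (sq_nonneg _) (sq_nonneg _)
    have h1le : (1:ℝ) ≤ ((n j : ℝ)) ^ 2 := by
      have h2 : (1:ℤ) ≤ (n j) ^ 2 := by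
        rcases lt_or_gt_of_ne hj with h | h <;> nlinarith
      exact_mod_cast h2
    have hjle : m ^ 2 ≤ ‖e j‖ ^ 2 :=
      pow_le_pow_left₀ (le_of_lt hm0) (hmin' j) 2
    have htj : m ^ 2 ≤ ((n j : ℝ)) ^ 2 * ‖e j‖ ^ 2 := by nlinarith
    have hsplit : ((n j : ℝ)) ^ 2 * ‖e j‖ ^ 2
        + ∑ k ∈ Finset.univ.erase j, ((n k : ℝ)) ^ 2 * ‖e k‖ ^ 2 = m ^ 2 := by
      exact (Finset.add_sum_erase Finset.univ
        (fun k => ((n k : ℝ)) ^ 2 * ‖e k‖ ^ 2) (Finset.mem_univ j)).trans hnorm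
    have hrest0 : ∀ k ∈ Finset.univ.erase j, ((n k : ℝ)) ^ 2 * ‖e k‖ ^ 2 = 0 := by
      have hnn : (0:ℝ) ≤ ∑ k ∈ Finset.univ.erase j, ((n k : ℝ)) ^ 2 * ‖e k‖ ^ 2 :=
        Finset.sum_nonneg fun k _ => hterm k
      have hle0 : ∑ k ∈ Finset.univ.erase j, ((n k : ℝ)) ^ 2 * ‖e k‖ ^ 2 ≤ 0 := by linarith
      exact (Finset.sum_eq_zero_iff_of_nonneg fun k _ => hterm k).1 (le_antisymm hle0 hnn)
    have hj2 : ((n j : ℝ)) ^ 2 * ‖e j‖ ^ 2 = m ^ 2 := by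
      have : ∑ k ∈ Finset.univ.erase j, ((n k : ℝ)) ^ 2 * ‖e k‖ ^ 2 = 0 :=
        Finset.sum_eq_zero hrest0
      linarith
    have hej2 : ‖e j‖ ^ 2 = m ^ 2 := by nlinarith
    have hej : ‖e j‖ = m := sq_eq_of_nonneg (norm_nonneg _) (le_of_lt hm0) hej2
    have hn1 : ((n j : ℝ)) ^ 2 = 1 := by
      have h0 : (0:ℝ) < ‖e j‖ ^ 2 := pow_pos (he0' j) 2
      nlinarith
    have hx : w (e i) = ((n j : ℝ)) • e j := by
      rw [hn, Finset.sum_eq_single j]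
      · intro k _ hk
        have hk0 : ((n k : ℝ)) ^ 2 * ‖e k‖ ^ 2 = 0 :=
          hrest0 k (Finset.mem_erase.2 ⟨hk, Finset.mem_univ k⟩)
        have hek : (0:ℝ) < ‖e k‖ ^ 2 := pow_pos (he0' k) 2
        have hnk : ((n k : ℝ)) ^ 2 = 0 := by
          rcases mul_eq_zero.1 hk0 with h | h
          · exact h
          · exact absurd h (ne_of_gt hek)
        have : ((n k : ℝ)) = 0 := pow_eq_zero_iff (two_ne_zero) |>.1 hnk
        rw [this, zero_smul]
      · intro h; exact absurd (Finset.mem_univ j) h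
    have hpm : ((n j : ℝ)) = 1 ∨ ((n j : ℝ)) = -1 :=
      mul_self_eq_one_iff.1 (by nlinarith)
    refine ⟨j, hej, ?_⟩
    rcases hpm with h | h
    · left; rw [hx, h, one_smul]
    · right; rw [hx, h, neg_one_smul]
  -- All basis vectors have minimal norm.
  have hall : ∀ i, ‖e i‖ = m := by
    by_contra hc
    push_neg at hc
    obtain ⟨k, hk⟩ := hc
    set V₁ : Submodule ℝ V := Submodule.span ℝ (e '' {i | ‖e i‖ = m}) with hV₁def
    set V₂ : Submodule ℝ V := Submodule.span ℝ (e '' {i | ‖e i‖ ≠ m}) with hV₂def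
    have hmem1 : ∀ i, ‖e i‖ = m → e i ∈ V₁ := fun i hi => Submodule.subset_span ⟨i, hi, rfl⟩
    have hmem2 : ∀ i, ‖e i‖ ≠ m → e i ∈ V₂ := fun i hi => Submodule.subset_span ⟨i, hi, rfl⟩
    have hV₁ne : V₁ ≠ ⊥ :=
      Submodule.ne_bot_iff _ |>.2 ⟨e i₀, hmem1 i₀ rfl, he0 i₀⟩
    have hV₂ne : V₂ ≠ ⊥ :=
      Submodule.ne_bot_iff _ |>.2 ⟨e k, hmem2 k hk, he0 k⟩
    have hO : V₁ ⟂ V₂ := by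
      rw [hV₁def, hV₂def]
      refine Submodule.isOrtho_span.2 ?_
      rintro u ⟨i, hi, rfl⟩ v ⟨j, hj, rfl⟩
      exact horth i j (fun h => hj (h ▸ hi))
    have hO' : ∀ x ∈ V₁, ∀ y ∈ V₂, ⟪x, y⟫ = 0 :=
      Submodule.isOrtho_iff_inner_eq.1 hO
    have hsup : V₁ ⊔ V₂ = ⊤ := by
      rw [hV₁def, hV₂def, ← Submodule.span_union, ← Set.image_union]
      have hU : {i : Fin r | ‖e i‖ = m} ∪ {i | ‖e i‖ ≠ m} = Set.univ := by
        ext i; simp [em]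
      rw [hU, Set.image_univ, hspan]
    have hinv1 : ∀ w ∈ W, ∀ x ∈ V₁, w x ∈ V₁ := by
      intro w hw x hx
      induction hx using Submodule.span_induction with
      | mem y hy =>
        obtain ⟨i, hi, rfl⟩ := hy
        obtain ⟨j, hj, h⟩ := keyA w hw i hi
        rcases h with h | h
        · rw [h]; exact hmem1 j hj
        · rw [h]; exact neg_mem (hmem1 j hj)
      | zero => rw [map_zero]; exact zero_mem _
      | add a b _ _ iha ihb => rw [map_add]; exact add_mem iha ihb
      | smul c a _ iha => rw [map_smul]; exact Submodule.smul_mem _ _ iha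
    have hle : V₂ ≤ V₁ᗮ := hO.symm
    have heq : V₂ = V₁ᗮ := by
      apply Submodule.eq_of_le_of_finrank_le hle
      have h1 : Module.finrank ℝ V₁ + Module.finrank ℝ V₁ᗮ = Module.finrank ℝ V :=
        V₁.finrank_add_finrank_orthogonal
      have h2 : Module.finrank ℝ ↥(V₁ ⊔ V₂) + Module.finrank ℝ ↥(V₁ ⊓ V₂)
          = Module.finrank ℝ V₁ + Module.finrank ℝ V₂ :=
        Submodule.finrank_sup_add_finrank_inf_eq V₁ V₂
      rw [hsup, finrank_top] at h2
      omega
    have hinv2 : ∀ w ∈ W, ∀ x ∈ V₂, w x ∈ V₂ := by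
      intro w hw x hx
      rw [heq] at hx ⊢
      rw [Submodule.mem_orthogonal] at hx ⊢
      intro u hu
      have hui : w⁻¹ u ∈ V₁ := hinv1 w⁻¹ (inv_mem hw) u hu
      have h1 : w (w⁻¹ u) = u := by
        rw [LinearIsometryEquiv.coe_inv]
        exact w.apply_symm_apply u
      calc ⟪u, w x⟫ = ⟪w (w⁻¹ u), w x⟫ := by rw [h1]
        _ = ⟪w⁻¹ u, x⟫ := w.inner_map_map _ _
        _ = 0 := hx _ hui
    have hΓsplit : Γ = (Γ ⊓ V₁.toAddSubgroup) ⊔ (Γ ⊓ V₂.toAddSubgroup) := by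
      refine le_antisymm ?_ (sup_le inf_le_left inf_le_left)
      have hcl : AddSubgroup.closure (Set.range e)
          ≤ (Γ ⊓ V₁.toAddSubgroup) ⊔ (Γ ⊓ V₂.toAddSubgroup) := by
        refine (AddSubgroup.closure_le _).2 ?_
        rintro y ⟨i, rfl⟩
        by_cases hi : ‖e i‖ = m
        · exact SetLike.le_def.1 le_sup_left
            (AddSubgroup.mem_inf.2 ⟨heΓ i, Submodule.mem_toAddSubgroup _ |>.2 (hmem1 i hi)⟩)
        · exact SetLike.le_def.1 le_sup_right
            (AddSubgroup.mem_inf.2 ⟨heΓ i, Submodule.mem_toAddSubgroup _ |>.2 (hmem2 i hi)⟩)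
      calc Γ = AddSubgroup.closure (Set.range e) := hΓ
        _ ≤ _ := hcl
    exact hindec ⟨V₁, V₂, hV₁ne, hV₂ne, hO', hsup, hinv1, hinv2, hΓsplit⟩
  have keyB : ∀ w ∈ W, ∀ i, ∃ j, w (e i) = e j ∨ w (e i) = - e j := by
    intro w hw i
    obtain ⟨j, _, h⟩ := keyA w hw i (hall i)
    exact ⟨j, h⟩
  have hsub : ∀ w ∈ W, ⇑w '' pmSet e ⊆ pmSet e := by
    intro w hw v hv
    obtain ⟨u, ⟨i, hu | hu⟩, rfl⟩ := hv
    · obtain ⟨j, h | h⟩ := keyB w hw i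
      · exact ⟨j, Or.inl (by rw [hu, h])⟩
      · exact ⟨j, Or.inr (by rw [hu, h])⟩
    · obtain ⟨j, h | h⟩ := keyB w hw i
      · exact ⟨j, Or.inr (by rw [hu, map_neg, h])⟩
      · exact ⟨j, Or.inl (by rw [hu, map_neg, h, neg_neg])⟩
  refine ⟨?_, fun i j => by rw [hall i, hall j]⟩
  intro w hw
  refine Set.Subset.antisymm (hsub w hw) ?_
  intro v hv
  have hv' : w⁻¹ v ∈ pmSet e := hsub w⁻¹ (inv_mem hw) ⟨v, hv, rfl⟩
  refine ⟨w⁻¹ v, hv', ?_⟩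
  rw [LinearIsometryEquiv.coe_inv]
  exact w.apply_symm_apply v
end

section
/- Let W be a subgroup of the orthogonal group of V such that w(Γ) = Γ for every w ∈ W, and assume indecomposability: there is no orthogonal direct sum decomposition V = V₁ ⊕ V₂ into two nonzero W-invariant linear subspaces such that Γ = (Γ ∩ V₁) + (Γ ∩ V₂). Then for every j ∈ {1, …, r} one has W(e_j) ∪ W(−e_j) = {±e₁, …, ±e_r}, and exactly one of the following holds: (I) W acts transitively on {±e₁, …, ±e_r}, i.e. W(e₁) = {±e₁, …, ±e_r}; or (II) the action of W on {±e₁, …, ±e_r} has exactly two orbits, which differ by a sign, and each orbit has the form {λ₁e₁, …, λ_re_r} for suitable signs λ_j ∈ {1, −1}. -/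
open scoped RealInnerProductSpace

/-- The orbit `W(v) = {w(v) : w ∈ W}` of `v` under a subgroup `W` of the orthogonal group. -/
def orbitOf {V : Type*} [NormedAddCommGroup V] [InnerProductSpace ℝ V]
    (W : Subgroup (V ≃ₗᵢ[ℝ] V)) (v : V) : Set V :=
  {x | ∃ w ∈ W, x = w v}

section Helpers

variable {V : Type*} [NormedAddCommGroup V] [InnerProductSpace ℝ V]

lemma mem_orbitOf_self (W : Subgroup (V ≃ₗᵢ[ℝ] V)) (v : V) : v ∈ orbitOf W v :=
  ⟨1, one_mem W, rfl⟩

lemma neg_mem_orbitOf_neg {W : Subgroup (V ≃ₗᵢ[ℝ] V)} {v x : V}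
    (h : x ∈ orbitOf W v) : -x ∈ orbitOf W (-v) := by
  obtain ⟨w, hw, rfl⟩ := h
  exact ⟨w, hw, (map_neg w v).symm⟩

lemma mem_orbitOf_neg_iff {W : Subgroup (V ≃ₗᵢ[ℝ] V)} {v x : V} :
    x ∈ orbitOf W (-v) ↔ -x ∈ orbitOf W v := by
  constructor
  · intro h
    have := neg_mem_orbitOf_neg h
    simpa using this
  · intro h
    have := neg_mem_orbitOf_neg h
    simpa using this

lemma orbitOf_eq_of_mem {W : Subgroup (V ≃ₗᵢ[ℝ] V)} {v x : V} (h : x ∈ orbitOf W v) :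
    orbitOf W x = orbitOf W v := by
  obtain ⟨w, hw, rfl⟩ := h
  ext y
  constructor
  · rintro ⟨u, hu, rfl⟩
    exact ⟨u * w, mul_mem hu hw, rfl⟩
  · rintro ⟨u, hu, rfl⟩
    refine ⟨u * w⁻¹, mul_mem hu (inv_mem hw), ?_⟩
    show u v = u (w.symm (w v))
    rw [w.symm_apply_apply]

lemma ortho_inner_sum {r : ℕ} (g : Fin r → V)
    (h : ∀ a b, a ≠ b → ⟪g a, g b⟫ = 0) (c : Fin r → ℝ) (i : Fin r) :
    ⟪g i, ∑ k, c k • g k⟫ = c i * ⟪g i, g i⟫ := by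
  rw [inner_sum, Finset.sum_eq_single i]
  · rw [real_inner_smul_right]
  · intro b _ hb
    rw [real_inner_smul_right, h i b (Ne.symm hb), mul_zero]
  · simp

lemma ortho_inner_self_sum {r : ℕ} (g : Fin r → V)
    (h : ∀ a b, a ≠ b → ⟪g a, g b⟫ = 0) (c : Fin r → ℝ) :
    ⟪∑ k, c k • g k, ∑ k, c k • g k⟫ = ∑ k, c k ^ 2 * ⟪g k, g k⟫ := by
  rw [sum_inner]
  refine Finset.sum_congr rfl fun k _ => ?_
  rw [real_inner_smul_left, ortho_inner_sum g h c k]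
  ring

lemma mem_coeffs {r : ℕ} (e : Fin r → V) (Γ : AddSubgroup V)
    (hΓ : Γ = AddSubgroup.closure (Set.range e))
    {x : V} (hx : x ∈ Γ) : ∃ c : Fin r → ℤ, ∑ k, ((c k : ℝ)) • e k = x := by
  have h1 : Γ ≤ (Submodule.span ℤ (Set.range e)).toAddSubgroup := by
    rw [hΓ]
    exact (AddSubgroup.closure_le _).2 Submodule.subset_span
  obtain ⟨c, hc⟩ := (Submodule.mem_span_range_iff_exists_fun ℤ).1 (h1 hx)
  refine ⟨c, ?_⟩
  rw [← hc]
  exact Finset.sum_congr rfl fun k _ => Int.cast_smul_eq_zsmul ℝ _ _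

lemma span_inner_zero {s t : Set V} (h : ∀ x ∈ s, ∀ y ∈ t, ⟪x, y⟫ = 0)
    {x y : V} (hx : x ∈ Submodule.span ℝ s) (hy : y ∈ Submodule.span ℝ t) : ⟪x, y⟫ = 0 := by
  induction hx using Submodule.span_induction with
  | mem z hz =>
    induction hy using Submodule.span_induction with
    | mem u hu => exact h z hz u hu
    | zero => exact inner_zero_right z
    | add a b _ _ ha hb => rw [inner_add_right, ha, hb, add_zero]
    | smul c a _ ha => rw [real_inner_smul_right, ha, mul_zero]
  | zero => exact inner_zero_left y
  | add a b _ _ ha hb => rw [inner_add_left, ha, hb, add_zero]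
  | smul c a _ ha => rw [real_inner_smul_left, ha, mul_zero]

lemma span_map_mem {s : Set V} (w : V ≃ₗᵢ[ℝ] V) (T : Submodule ℝ V)
    (h : ∀ z ∈ s, w z ∈ T) {x : V} (hx : x ∈ Submodule.span ℝ s) : w x ∈ T := by
  induction hx using Submodule.span_induction with
  | mem z hz => exact h z hz
  | zero => simpa using T.zero_mem
  | add a b _ _ ha hb => rw [map_add]; exact T.add_mem ha hb
  | smul c a _ ha => rw [map_smul]; exact T.smul_mem c ha

lemma int_one_le_sq {a : ℤ} (ha : a ≠ 0) : (1 : ℝ) ≤ (a : ℝ) ^ 2 := by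
  have h : (1 : ℤ) ≤ a ^ 2 := by rcases ha.lt_or_gt with h | h <;> nlinarith
  exact_mod_cast h

/-- Key lemma: any element of a lattice-preserving isometry group maps each `e j`
to some `± e i`. -/
lemma key_pm {r : ℕ} (e : Fin r → V) (he0 : ∀ i, e i ≠ 0)
    (horth : ∀ i j, i ≠ j → ⟪e i, e j⟫ = 0)
    (Γ : AddSubgroup V) (hΓ : Γ = AddSubgroup.closure (Set.range e))
    (w : V ≃ₗᵢ[ℝ] V) (hw : ⇑w '' (Γ : Set V) = (Γ : Set V)) (j : Fin r) :
    w (e j) ∈ pmSet e := by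
  have hd : ∀ i, 0 < ⟪e i, e i⟫ := by
    intro i
    rw [real_inner_self_eq_norm_sq]
    exact pow_pos (norm_pos_iff.2 (he0 i)) 2
  have heΓ : ∀ i, e i ∈ Γ := fun i => by
    rw [hΓ]; exact AddSubgroup.subset_closure ⟨i, rfl⟩
  have hforth : ∀ a b, a ≠ b → ⟪w (e a), w (e b)⟫ = 0 := fun a b hab => by
    rw [LinearIsometryEquiv.inner_map_map]; exact horth a b hab
  have hfd : ∀ a, ⟪w (e a), w (e a)⟫ = ⟪e a, e a⟫ := fun a =>
    LinearIsometryEquiv.inner_map_map w _ _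
  -- coefficients of w (e j) in the basis e
  have hfjΓ : w (e j) ∈ Γ := by
    have h1 : w (e j) ∈ ⇑w '' (Γ : Set V) := ⟨e j, heΓ j, rfl⟩
    rw [hw] at h1
    exact h1
  obtain ⟨n, hn⟩ := mem_coeffs e Γ hΓ hfjΓ
  have hfj0 : w (e j) ≠ 0 := fun h => he0 j ((map_eq_zero_iff w w.injective).1 h)
  have hex : ∃ i, n i ≠ 0 := by
    by_contra h
    push_neg at h
    apply hfj0
    rw [← hn]
    simp [h]
  obtain ⟨i, hni⟩ := hex
  -- coefficients of e i in the basis w (e ·)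
  obtain ⟨y, hyΓ, hyw⟩ : ∃ y ∈ (Γ : Set V), w y = e i := by
    have : e i ∈ ⇑w '' (Γ : Set V) := by rw [hw]; exact heΓ i
    simpa using this
  obtain ⟨m, hm⟩ := mem_coeffs e Γ hΓ hyΓ
  have hei : e i = ∑ k, ((m k : ℝ)) • w (e k) := by
    rw [← hyw, ← hm, map_sum]
    simp
  have hA : ⟪e j, e j⟫ = ∑ k, ((n k : ℝ)) ^ 2 * ⟪e k, e k⟫ := by
    rw [← hfd j]
    conv_lhs => rw [← hn]
    exact ortho_inner_self_sum e horth _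
  have hB : ⟪e i, e i⟫ = ∑ k, ((m k : ℝ)) ^ 2 * ⟪e k, e k⟫ := by
    conv_lhs => rw [hei]
    rw [ortho_inner_self_sum (fun k => w (e k)) hforth]
    exact Finset.sum_congr rfl fun k _ => by rw [hfd]
  have hC : (n i : ℝ) * ⟪e i, e i⟫ = (m j : ℝ) * ⟪e j, e j⟫ := by
    have h1 : ⟪e i, w (e j)⟫ = (n i : ℝ) * ⟪e i, e i⟫ := by
      conv_lhs => rw [← hn]
      exact ortho_inner_sum e horth _ i
    have h2 : ⟪w (e j), e i⟫ = (m j : ℝ) * ⟪e j, e j⟫ := by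
      conv_lhs => rw [hei]
      rw [ortho_inner_sum (fun k => w (e k)) hforth, hfd]
    rw [← h1, real_inner_comm, h2]
  have hterm : ∀ (c : Fin r → ℤ) (k : Fin r), (0:ℝ) ≤ ((c k : ℝ)) ^ 2 * ⟪e k, e k⟫ :=
    fun c k => mul_nonneg (sq_nonneg _) (le_of_lt (hd k))
  have hA' : (n i : ℝ) ^ 2 * ⟪e i, e i⟫ ≤ ⟪e j, e j⟫ := by
    rw [hA]
    exact Finset.single_le_sum (fun k _ => hterm n k) (Finset.mem_univ i)
  have hB' : (m j : ℝ) ^ 2 * ⟪e j, e j⟫ ≤ ⟪e i, e i⟫ := by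
    rw [hB]
    exact Finset.single_le_sum (fun k _ => hterm m k) (Finset.mem_univ j)
  have hmj : m j ≠ 0 := by
    intro h
    rw [h] at hC
    simp only [Int.cast_zero, zero_mul] at hC
    rcases mul_eq_zero.1 hC with h' | h'
    · exact hni (by exact_mod_cast h')
    · exact (hd i).ne' h'
  have hni1 : (1 : ℝ) ≤ (n i : ℝ) ^ 2 := int_one_le_sq hni
  have hmj1 : (1 : ℝ) ≤ (m j : ℝ) ^ 2 := int_one_le_sq hmj
  have hprod : (n i : ℝ) ^ 2 * (m j : ℝ) ^ 2 ≤ 1 := by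
    nlinarith [hd i, hd j, mul_le_mul_of_nonneg_left hB' (sq_nonneg ((n i : ℝ)))]
  have hn2 : (n i : ℝ) ^ 2 = 1 := by nlinarith [sq_nonneg ((n i : ℝ)), sq_nonneg ((m j : ℝ))]
  have hm2 : (m j : ℝ) ^ 2 = 1 := by nlinarith [sq_nonneg ((n i : ℝ)), sq_nonneg ((m j : ℝ))]
  rw [hn2, one_mul] at hA'
  rw [hm2, one_mul] at hB'
  have hde : ⟪e j, e j⟫ = ⟪e i, e i⟫ := le_antisymm hB' hA'
  -- all other coefficients vanish
  have hzero : ∀ k, k ≠ i → (n k : ℝ) = 0 := by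
    have hsplit := hA
    rw [← Finset.add_sum_erase _ _ (Finset.mem_univ i), hn2, one_mul] at hsplit
    have hsum0 : ∑ k ∈ Finset.univ.erase i, ((n k : ℝ)) ^ 2 * ⟪e k, e k⟫ = 0 := by
      linarith
    intro k hk
    have hk0 : ((n k : ℝ)) ^ 2 * ⟪e k, e k⟫ = 0 :=
      (Finset.sum_eq_zero_iff_of_nonneg (fun k _ => hterm n k)).1 hsum0 k
        (Finset.mem_erase.2 ⟨hk, Finset.mem_univ k⟩)
    rcases mul_eq_zero.1 hk0 with h' | h'
    · exact pow_eq_zero_iff two_ne_zero |>.1 h'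
    · exact absurd h' (hd k).ne'
  have hfj : w (e j) = ((n i : ℝ)) • e i := by
    rw [← hn, Finset.sum_eq_single i]
    · intro b _ hb
      rw [hzero b hb, zero_smul]
    · simp
  have hpm : n i = 1 ∨ n i = -1 := mul_self_eq_one_iff.1 (by rw [← sq]; exact_mod_cast hn2)
  rcases hpm with h | h
  · exact ⟨i, Or.inl (by rw [hfj, h]; simp)⟩
  · exact ⟨i, Or.inr (by rw [hfj, h]; simp)⟩

end Helpers

theorem stmt1
    {V : Type*} [NormedAddCommGroup V] [InnerProductSpace ℝ V] [FiniteDimensional ℝ V]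
    {r : ℕ} (hr : 0 < r) (hdim : Module.finrank ℝ V = r)
    (e : Fin r → V) (he0 : ∀ i, e i ≠ 0)
    (horth : ∀ i j, i ≠ j → ⟪e i, e j⟫ = 0)
    (hspan : Submodule.span ℝ (Set.range e) = ⊤)
    (Γ : AddSubgroup V) (hΓ : Γ = AddSubgroup.closure (Set.range e))
    (W : Subgroup (V ≃ₗᵢ[ℝ] V))
    (hWΓ : ∀ w ∈ W, ⇑w '' (Γ : Set V) = (Γ : Set V))
    (hindec : ¬ ∃ V₁ V₂ : Submodule ℝ V, V₁ ≠ ⊥ ∧ V₂ ≠ ⊥ ∧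
      (∀ x ∈ V₁, ∀ y ∈ V₂, ⟪x, y⟫ = 0) ∧ V₁ ⊔ V₂ = ⊤ ∧
      (∀ w ∈ W, ∀ x ∈ V₁, w x ∈ V₁) ∧ (∀ w ∈ W, ∀ x ∈ V₂, w x ∈ V₂) ∧
      Γ = (Γ ⊓ V₁.toAddSubgroup) ⊔ (Γ ⊓ V₂.toAddSubgroup)) :
    (∀ j : Fin r, orbitOf W (e j) ∪ orbitOf W (-e j) = pmSet e) ∧
    Xor' (orbitOf W (e ⟨0, hr⟩) = pmSet e)
      (∃ lam : Fin r → ℝ, (∀ j, lam j = 1 ∨ lam j = -1) ∧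
        orbitOf W (e ⟨0, hr⟩) = Set.range (fun j => lam j • e j) ∧
        orbitOf W (-e ⟨0, hr⟩) = Set.range (fun j => -lam j • e j) ∧
        orbitOf W (e ⟨0, hr⟩) ≠ orbitOf W (-e ⟨0, hr⟩) ∧
        orbitOf W (e ⟨0, hr⟩) ∪ orbitOf W (-e ⟨0, hr⟩) = pmSet e) := by
  classical
  have hkey : ∀ w ∈ W, ∀ k, w (e k) ∈ pmSet e := fun w hw k =>
    key_pm e he0 horth Γ hΓ w (hWΓ w hw) k
  -- Part 1
  have hpart1 : ∀ j : Fin r, orbitOf W (e j) ∪ orbitOf W (-e j) = pmSet e := by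
    intro j
    have hUneg : ∀ x, x ∈ orbitOf W (e j) ∪ orbitOf W (-e j) →
        -x ∈ orbitOf W (e j) ∪ orbitOf W (-e j) := by
      rintro x (h | h)
      · exact Or.inr (neg_mem_orbitOf_neg h)
      · exact Or.inl (by simpa using neg_mem_orbitOf_neg h)
    apply Set.Subset.antisymm
    · rintro x (⟨w, hw, rfl⟩ | ⟨w, hw, rfl⟩)
      · exact hkey w hw j
      · rw [map_neg]
        obtain ⟨i, hi | hi⟩ := hkey w hw j
        · exact ⟨i, Or.inr (by rw [hi])⟩
        · exact ⟨i, Or.inl (by rw [hi, neg_neg])⟩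
    · -- the harder inclusion, via indecomposability
      set S : Set (Fin r) := {i | e i ∈ orbitOf W (e j) ∪ orbitOf W (-e j)} with hS
      have hSj : j ∈ S := Or.inl (mem_orbitOf_self W (e j))
      have hstep : ∀ w ∈ W, ∀ k, k ∈ S → ∃ i ∈ S, w (e k) = e i ∨ w (e k) = -e i := by
        intro w hw k hk
        have hwk : w (e k) ∈ orbitOf W (e j) ∪ orbitOf W (-e j) := by
          rcases hk with h | h
          · exact Or.inl ((orbitOf_eq_of_mem h) ▸ ⟨w, hw, rfl⟩)
          · exact Or.inr ((orbitOf_eq_of_mem h) ▸ ⟨w, hw, rfl⟩)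
        obtain ⟨i, hi | hi⟩ := hkey w hw k
        · refine ⟨i, ?_, Or.inl hi⟩
          show e i ∈ orbitOf W (e j) ∪ orbitOf W (-e j)
          rw [← hi]; exact hwk
        · refine ⟨i, ?_, Or.inr hi⟩
          show e i ∈ orbitOf W (e j) ∪ orbitOf W (-e j)
          have : e i = -(w (e k)) := by rw [hi, neg_neg]
          rw [this]
          exact hUneg _ hwk
      have hstep' : ∀ w ∈ W, ∀ k, k ∉ S → ∃ i, i ∉ S ∧ (w (e k) = e i ∨ w (e k) = -e i) := by
        intro w hw k hk
        obtain ⟨i, hi⟩ := hkey w hw k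
        refine ⟨i, fun hiS => hk ?_, hi⟩
        obtain ⟨i', hi'S, hh⟩ := hstep w⁻¹ (inv_mem hw) i hiS
        have hek : e k = w.symm (w (e k)) := (w.symm_apply_apply (e k)).symm
        have hi'U : e i' ∈ orbitOf W (e j) ∪ orbitOf W (-e j) := hi'S
        show e k ∈ orbitOf W (e j) ∪ orbitOf W (-e j)
        rcases hi with h | h
        · rw [hek, h]
          rcases hh with h' | h'
          · rw [show w.symm (e i) = e i' from h']; exact hi'U
          · rw [show w.symm (e i) = -e i' from h']
            exact hUneg _ hi'U
        · rw [hek, h, map_neg]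
          rcases hh with h' | h'
          · rw [show w.symm (e i) = e i' from h']
            exact hUneg _ hi'U
          · rw [show w.symm (e i) = -e i' from h', neg_neg]; exact hi'U
      have hSall : ∀ i, i ∈ S := by
        by_contra hcon
        push_neg at hcon
        obtain ⟨i0, hi0⟩ := hcon
        apply hindec
        refine ⟨Submodule.span ℝ (e '' S), Submodule.span ℝ (e '' Sᶜ), ?_, ?_, ?_, ?_, ?_, ?_, ?_⟩
        · rw [Submodule.ne_bot_iff]
          exact ⟨e j, Submodule.subset_span ⟨j, hSj, rfl⟩, he0 j⟩
        · rw [Submodule.ne_bot_iff]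
          exact ⟨e i0, Submodule.subset_span ⟨i0, hi0, rfl⟩, he0 i0⟩
        · intro x hx y hy
          refine span_inner_zero ?_ hx hy
          rintro _ ⟨a, ha, rfl⟩ _ ⟨b, hb, rfl⟩
          exact horth a b (fun hab => hb (hab ▸ ha))
        · rw [← Submodule.span_union, ← Set.image_union, Set.union_compl_self,
            Set.image_univ, hspan]
        · intro w hw x hx
          refine span_map_mem w _ ?_ hx
          rintro _ ⟨k, hk, rfl⟩
          obtain ⟨i, hiS, hi | hi⟩ := hstep w hw k hk
          · rw [hi]; exact Submodule.subset_span ⟨i, hiS, rfl⟩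
          · rw [hi]
            exact Submodule.neg_mem _ (Submodule.subset_span ⟨i, hiS, rfl⟩)
        · intro w hw x hx
          refine span_map_mem w _ ?_ hx
          rintro _ ⟨k, hk, rfl⟩
          obtain ⟨i, hiS, hi | hi⟩ := hstep' w hw k hk
          · rw [hi]; exact Submodule.subset_span ⟨i, hiS, rfl⟩
          · rw [hi]
            exact Submodule.neg_mem _ (Submodule.subset_span ⟨i, hiS, rfl⟩)
        · apply le_antisymm
          · rw [hΓ]
            refine (AddSubgroup.closure_le _).2 ?_
            rintro _ ⟨k, rfl⟩
            have hkΓ : e k ∈ AddSubgroup.closure (Set.range e) :=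
              AddSubgroup.subset_closure ⟨k, rfl⟩
            by_cases hkS : k ∈ S
            · apply AddSubgroup.mem_sup_left
              refine AddSubgroup.mem_inf.2 ⟨hkΓ, ?_⟩
              exact Submodule.subset_span ⟨k, hkS, rfl⟩
            · apply AddSubgroup.mem_sup_right
              refine AddSubgroup.mem_inf.2 ⟨hkΓ, ?_⟩
              exact Submodule.subset_span ⟨k, hkS, rfl⟩
          · exact sup_le inf_le_left inf_le_left
      rintro v ⟨i, hv | hv⟩
      · rw [hv]; exact hSall i
      · rw [hv]; exact hUneg _ (hSall i)
  refine ⟨hpart1, ?_⟩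
  set j0 : Fin r := ⟨0, hr⟩
  by_cases hEq : orbitOf W (e j0) = orbitOf W (-e j0)
  · left
    constructor
    · rw [← hpart1 j0, hEq, Set.union_self]
    · rintro ⟨lam, _, _, _, hne, _⟩
      exact hne hEq
  · right
    have hdisj : ∀ x, x ∈ orbitOf W (e j0) → x ∉ orbitOf W (-e j0) := by
      intro x h1 h2
      exact hEq ((orbitOf_eq_of_mem h1).symm.trans (orbitOf_eq_of_mem h2))
    constructor
    · -- case (II)
      set lam : Fin r → ℝ := fun j => if e j ∈ orbitOf W (e j0) then 1 else -1 with hlam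
      have hin : ∀ j, lam j • e j ∈ orbitOf W (e j0) := by
        intro j
        by_cases h : e j ∈ orbitOf W (e j0)
        · simpa [hlam, h] using h
        · have hj : e j ∈ pmSet e := ⟨j, Or.inl rfl⟩
          rw [← hpart1 j0] at hj
          rcases hj with h1 | h1
          · exact absurd h1 h
          · have h2 : -e j ∈ orbitOf W (e j0) := mem_orbitOf_neg_iff.1 h1
            simpa [hlam, h] using h2
      have hrange1 : orbitOf W (e j0) = Set.range (fun j => lam j • e j) := by
        apply Set.Subset.antisymm
        · intro x hx
          have hxp : x ∈ pmSet e := by rw [← hpart1 j0]; exact Or.inl hx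
          obtain ⟨i, h | h⟩ := hxp
          · have hmem : e i ∈ orbitOf W (e j0) := h ▸ hx
            refine ⟨i, ?_⟩
            show lam i • e i = x
            have hl : lam i = 1 := by simp [hlam, hmem]
            rw [hl, one_smul, ← h]
          · have h1 : e i ∉ orbitOf W (e j0) := by
              intro hmem
              have h2 : -e i ∈ orbitOf W (-e j0) := neg_mem_orbitOf_neg hmem
              exact hdisj x hx (h ▸ h2)
            refine ⟨i, ?_⟩
            show lam i • e i = x
            have hl : lam i = -1 := by simp [hlam, h1]
            rw [hl, h, neg_one_smul]
        · rintro x ⟨i, rfl⟩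
          exact hin i
      have hrange2 : orbitOf W (-e j0) = Set.range (fun j => -lam j • e j) := by
        apply Set.Subset.antisymm
        · intro x hx
          have h1 : -x ∈ orbitOf W (e j0) := mem_orbitOf_neg_iff.1 hx
          rw [hrange1] at h1
          obtain ⟨i, hi⟩ := h1
          refine ⟨i, ?_⟩
          show -lam i • e i = x
          have : lam i • e i = -x := hi
          rw [neg_smul, this, neg_neg]
        · rintro x ⟨i, rfl⟩
          rw [mem_orbitOf_neg_iff]
          show -(-lam i • e i) ∈ orbitOf W (e j0)
          rw [neg_smul, neg_neg]
          exact hin i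
      refine ⟨lam, ?_, hrange1, hrange2, hEq, hpart1 j0⟩
      intro j
      by_cases h : e j ∈ orbitOf W (e j0) <;> simp [hlam, h]
    · -- case (I) fails
      intro hA
      apply hEq
      have hpm_neg : ∀ x, x ∈ pmSet e → -x ∈ pmSet e := by
        rintro x ⟨i, h | h⟩
        · exact ⟨i, Or.inr (by rw [h])⟩
        · exact ⟨i, Or.inl (by rw [h, neg_neg])⟩
      apply Set.Subset.antisymm
      · rw [hA]
        intro x hx
        rw [mem_orbitOf_neg_iff, hA]
        exact hpm_neg x hx
      · intro x hx
        rw [hA]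
        have h1 : -x ∈ orbitOf W (e j0) := mem_orbitOf_neg_iff.1 hx
        rw [hA] at h1
        have := hpm_neg _ h1
        simpa using this
end

section
/- Assume additionally that all basis vectors have the same length: ‖e_i‖ = L for all i. Let α ∈ V* be a nonzero linear functional such that 2α(e_j) ∈ ℤ for every j and such that α^∨ ∈ 2Γ (i.e. (1/2)α^∨ is a ℤ-linear combination of e₁, …, e_r). Then 2α belongs to the set {ε_j, −ε_j, 2ε_j, −2ε_j : 1 ≤ j ≤ r} ∪ {ε_j + ε_k, −(ε_j + ε_k), ε_j − ε_k, −(ε_j − ε_k) : 1 ≤ j < k ≤ r}. -/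
open scoped RealInnerProductSpace

theorem combin6' {r : ℕ} (c n : Fin r → ℤ)
    (hrel : ∀ j, (∑ i, (c i)^2) * n j = 2 * c j) (hne : ∃ j, c j ≠ 0) :
    (∃ j, (∀ i, i ≠ j → n i = 0) ∧ (n j = 1 ∨ n j = -1 ∨ n j = 2 ∨ n j = -2)) ∨
    (∃ j k, j < k ∧ (∀ i, i ≠ j → i ≠ k → n i = 0) ∧
      ((n j = 1 ∨ n j = -1) ∧ (n k = 1 ∨ n k = -1))) := by
  obtain ⟨j0, hj0⟩ := hne
  set m : ℤ := ∑ i, (c i)^2 with hm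
  have hterm : ∀ i, i ∈ Finset.univ → (0:ℤ) ≤ (c i)^2 := fun i _ => sq_nonneg _
  have hle : ∀ j, (c j)^2 ≤ m := fun j => Finset.single_le_sum hterm (Finset.mem_univ j)
  have hmpos : 0 < m := lt_of_lt_of_le (by positivity) (hle j0)
  have hbound : ∀ j, c j ≠ 0 → m ≤ 2 * |c j| ∧ |c j| ≤ 2 := by
    intro j hj
    have h1 := hrel j
    have hnj : n j ≠ 0 := by
      intro h; rw [h, mul_zero] at h1; omega
    have habs : 1 ≤ |n j| := Int.one_le_abs hnj
    have h2 : m ≤ 2 * |c j| := by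
      calc m = m * 1 := (mul_one m).symm
        _ ≤ m * |n j| := mul_le_mul_of_nonneg_left habs hmpos.le
        _ = |m * n j| := by rw [abs_mul, abs_of_pos hmpos]
        _ = 2 * |c j| := by rw [h1, abs_mul]; norm_num
    refine ⟨h2, ?_⟩
    have h3 : |c j| * |c j| ≤ 2 * |c j| := by nlinarith [hle j, sq_abs (c j)]
    nlinarith [Int.one_le_abs hj]
  have hsplit : ∀ j : Fin r, m = (c j)^2 + ∑ i ∈ Finset.univ.erase j, (c i)^2 := by
    intro j
    rw [hm, ← Finset.add_sum_erase _ _ (Finset.mem_univ j)]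
  have herase : ∀ (j i : Fin r), i ≠ j → (c i)^2 ≤ ∑ i ∈ Finset.univ.erase j, (c i)^2 :=
    fun j i hi => Finset.single_le_sum (fun i _ => sq_nonneg (c i))
      (Finset.mem_erase.mpr ⟨hi, Finset.mem_univ i⟩)
  by_cases hA : ∃ j, c j = 2 ∨ c j = -2
  · obtain ⟨j, hj⟩ := hA
    have hcj2 : (c j)^2 = 4 := by rcases hj with h | h <;> rw [h] <;> norm_num
    have hcjne : c j ≠ 0 := by rcases hj with h | h <;> omega
    have habs2 : |c j| = 2 := by rcases hj with h | h <;> rw [h] <;> norm_num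
    have hm4 : m = 4 := by
      have h1 := (hbound j hcjne).1
      have h2 := hle j
      omega
    have hrest : ∀ i, i ≠ j → c i = 0 := by
      intro i hi
      have hsum0 : ∑ i ∈ Finset.univ.erase j, (c i)^2 = 0 := by
        have := hsplit j; omega
      have := (Finset.sum_eq_zero_iff_of_nonneg (fun i _ => sq_nonneg (c i))).mp hsum0
        i (Finset.mem_erase.mpr ⟨hi, Finset.mem_univ i⟩)
      exact pow_eq_zero_iff (by norm_num) |>.mp this
    left
    refine ⟨j, ?_, ?_⟩
    · intro i hi
      have := hrel i
      rw [hm4, hrest i hi] at this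
      omega
    · have := hrel j
      rw [hm4] at this
      rcases hj with h | h <;> rw [h] at this <;> omega
  · push_neg at hA
    have hpm : ∀ j, c j ≠ 0 → c j = 1 ∨ c j = -1 := by
      intro j hj
      have h2 := abs_le.mp (hbound j hj).2
      have h3 := hA j
      omega
    have hsq1 : ∀ j, c j ≠ 0 → (c j)^2 = 1 := by
      intro j hj; rcases hpm j hj with h | h <;> rw [h] <;> norm_num
    have hm2 : m ≤ 2 := by
      have h1 := (hbound j0 hj0).1
      rcases hpm j0 hj0 with h | h <;> rw [h] at h1 <;> simp at h1 <;> omega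
    have hm1 : 1 ≤ m := hmpos
    interval_cases m
    · -- m = 1
      left
      refine ⟨j0, ?_, ?_⟩
      · intro i hi
        have hci : c i = 0 := by
          by_contra hci
          have h1 := hsq1 i hci
          have h2 := hsq1 j0 hj0
          have h3 := herase j0 i hi
          have h4 := hsplit j0
          omega
        have := hrel i; rw [hci] at this; omega
      · have h := hrel j0
        rcases hpm j0 hj0 with h1 | h1 <;> rw [h1] at h <;> omega
    · -- m = 2
      classical
      set s : Finset (Fin r) := Finset.univ.filter (fun i => c i ≠ 0) with hs
      have hsub : ∑ i ∈ s, (c i)^2 = ∑ i, (c i)^2 :=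
        Finset.sum_subset (Finset.filter_subset _ _)
          (fun i _ hi => by
            simp only [hs, Finset.mem_filter, Finset.mem_univ, true_and, not_not] at hi
            rw [hi]; ring)
      have hsum_s : ∑ i ∈ s, (c i)^2 = 2 := by omega
      have hcard : s.card = 2 := by
        have h1 : ∑ i ∈ s, (c i)^2 = ∑ _i ∈ s, (1:ℤ) :=
          Finset.sum_congr rfl (fun i hi => hsq1 i (by
            simpa [hs] using (Finset.mem_filter.mp hi).2))
        rw [h1, Finset.sum_const] at hsum_s
        simp [nsmul_eq_mul] at hsum_s
        exact_mod_cast hsum_s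
      obtain ⟨a, b, hab, hsab⟩ := Finset.card_eq_two.mp hcard
      have hmem : ∀ i, c i ≠ 0 → (i = a ∨ i = b) := by
        intro i hi
        have : i ∈ s := by simp [hs, hi]
        rw [hsab] at this
        simpa using this
      have hna : n a = c a := by have := hrel a; omega
      have hnb : n b = c b := by have := hrel b; omega
      have hca : c a ≠ 0 := by
        have : a ∈ s := by rw [hsab]; simp
        simpa [hs] using this
      have hcb : c b ≠ 0 := by
        have : b ∈ s := by rw [hsab]; simp
        simpa [hs] using this
      have hzero : ∀ i, i ≠ a → i ≠ b → n i = 0 := by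
        intro i hia hib
        have hci : c i = 0 := by
          by_contra h
          rcases hmem i h with h' | h' <;> [exact hia h'; exact hib h']
        have := hrel i; rw [hci] at this; omega
      right
      rcases hab.lt_or_gt with hlt | hlt
      · exact ⟨a, b, hlt, hzero, by rw [hna]; exact hpm a hca, by rw [hnb]; exact hpm b hcb⟩
      · exact ⟨b, a, hlt, fun i h1 h2 => hzero i h2 h1,
          by rw [hnb]; exact hpm b hcb, by rw [hna]; exact hpm a hca⟩

theorem stmt6
    {V : Type*} [NormedAddCommGroup V] [InnerProductSpace ℝ V] [FiniteDimensional ℝ V]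
    {r : ℕ} (hr : 1 ≤ r) (hdim : Module.finrank ℝ V = r)
    (e : Fin r → V) (he0 : ∀ i, e i ≠ 0)
    (horth : ∀ i j, i ≠ j → ⟪e i, e j⟫ = 0)
    (hspan : Submodule.span ℝ (Set.range e) = ⊤)
    (L : ℝ) (hlen : ∀ i, ‖e i‖ = L)
    (ε : Fin r → Module.Dual ℝ V) (hdual : ∀ i j, ε i (e j) = if i = j then 1 else 0)
    (α : Module.Dual ℝ V) (hα : α ≠ 0)
    (Hα : V) (hHα : ∀ H, α H = ⟪Hα, H⟫)
    (hint : ∀ j, ∃ n : ℤ, 2 * α (e j) = (n : ℝ))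
    (hcov : ∃ c : Fin r → ℤ, (2⁻¹ : ℝ) • ((2 / ‖Hα‖ ^ 2) • Hα) = ∑ i, (c i : ℝ) • e i) :
    (∃ j, (2 : ℝ) • α = ε j ∨ (2 : ℝ) • α = -ε j ∨
      (2 : ℝ) • α = (2 : ℝ) • ε j ∨ (2 : ℝ) • α = -((2 : ℝ) • ε j)) ∨
    (∃ j k : Fin r, j < k ∧ ((2 : ℝ) • α = ε j + ε k ∨ (2 : ℝ) • α = -(ε j + ε k) ∨
      (2 : ℝ) • α = ε j - ε k ∨ (2 : ℝ) • α = -(ε j - ε k))) := by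
  classical
  -- basic positivity
  have i0 : Fin r := ⟨0, hr⟩
  have hL : 0 < L := by rw [← hlen i0]; exact norm_pos_iff.mpr (he0 i0)
  have hHne : Hα ≠ 0 := by
    intro h
    apply hα
    ext H
    rw [hHα H, h]
    simp
  set N : ℝ := ‖Hα‖ ^ 2 with hN
  have hNpos : 0 < N := by rw [hN]; exact pow_pos (norm_pos_iff.mpr hHne) 2
  obtain ⟨c, hc⟩ := hcov
  choose n hn using hint
  set v : V := ∑ i, (c i : ℝ) • e i with hv
  have hcv : N⁻¹ • Hα = v := by
    rw [← hc, smul_smul]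
    congr 1
    field_simp
  have hHv : Hα = N • v := by
    rw [← hcv, smul_smul, mul_inv_cancel₀ hNpos.ne', one_smul]
  -- inner products with basis
  have hip : ∀ j, ⟪v, e j⟫ = (c j : ℝ) * L ^ 2 := by
    intro j
    rw [hv, sum_inner]
    rw [Finset.sum_eq_single j]
    · rw [real_inner_smul_left, real_inner_self_eq_norm_sq, hlen j]
    · intro i _ hij
      rw [real_inner_smul_left, horth i j hij, mul_zero]
    · intro h; exact absurd (Finset.mem_univ j) h
  have hαe : ∀ j, α (e j) = N * ((c j : ℝ) * L ^ 2) := by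
    intro j
    rw [hHα, hHv, real_inner_smul_left, hip j]
  -- key normalization : N * L^2 * ∑ c² = 1
  have hkey : N * L ^ 2 * (∑ i, (c i : ℝ) ^ 2) = 1 := by
    have h1 : α Hα = N := by rw [hHα, real_inner_self_eq_norm_sq]
    have h2 : α Hα = N * (N * L ^ 2 * ∑ i, (c i : ℝ) ^ 2) := by
      rw [hHv, map_smul, smul_eq_mul, hv, map_sum]
      have hterm : ∀ i ∈ Finset.univ, α ((c i : ℝ) • e i) = N * L ^ 2 * (c i : ℝ) ^ 2 := by
        intro i _
        rw [map_smul, smul_eq_mul, hαe i]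
        ring
      rw [Finset.sum_congr rfl hterm]
      congr 1
      rw [Finset.mul_sum]
    have := h1.symm.trans h2
    field_simp at this ⊢
    nlinarith [hNpos]
  -- integer relation
  have hreli : ∀ j, (∑ i, (c i)^2) * n j = 2 * c j := by
    intro j
    have hreal : ((∑ i, (c i)^2 : ℤ) : ℝ) * (n j : ℝ) = 2 * (c j : ℝ) := by
      push_cast
      rw [← hn j, hαe j]
      calc (∑ i, (c i:ℝ)^2) * (2 * (N * ((c j:ℝ) * L^2)))
          = 2 * (c j:ℝ) * (N * L^2 * ∑ i, (c i:ℝ)^2) := by ring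
        _ = 2 * (c j:ℝ) := by rw [hkey, mul_one]
    exact_mod_cast hreal
  have hcne : ∃ j, c j ≠ 0 := by
    by_contra h
    push_neg at h
    apply hHne
    rw [hHv, hv]
    have : ∀ i ∈ Finset.univ, ((c i : ℝ)) • e i = 0 := by
      intro i _; rw [h i]; simp
    rw [Finset.sum_congr rfl this]
    simp
  -- extension lemma
  have hext : ∀ f g : Module.Dual ℝ V, (∀ k, f (e k) = g (e k)) → f = g := by
    intro f g h
    exact LinearMap.ext_on_range hspan h
  have h2α : ∀ k, ((2:ℝ) • α) (e k) = (n k : ℝ) := by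
    intro k
    rw [LinearMap.smul_apply, smul_eq_mul, hn k]
  rcases combin6' c n hreli hcne with ⟨j, hz, hval⟩ | ⟨j, k, hjk, hz, hvj, hvk⟩
  · left
    refine ⟨j, ?_⟩
    rcases hval with h | h | h | h
    · left
      apply hext; intro k
      rw [h2α k, hdual j k]
      by_cases hk : k = j
      · subst hk; rw [h]; simp
      · rw [hz k hk]; simp [Ne.symm hk, hk]
    · right; left
      apply hext; intro k
      rw [h2α k, LinearMap.neg_apply, hdual j k]
      by_cases hk : k = j
      · subst hk; rw [h]; simp
      · rw [hz k hk]; simp [Ne.symm hk, hk]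
    · right; right; left
      apply hext; intro k
      rw [h2α k, LinearMap.smul_apply, smul_eq_mul, hdual j k]
      by_cases hk : k = j
      · subst hk; rw [h]; simp
      · rw [hz k hk]; simp [Ne.symm hk, hk]
    · right; right; right
      apply hext; intro k
      rw [h2α k, LinearMap.neg_apply, LinearMap.smul_apply, smul_eq_mul, hdual j k]
      by_cases hk : k = j
      · subst hk; rw [h]; simp
      · rw [hz k hk]; simp [Ne.symm hk, hk]
  · right
    have hjk' : j ≠ k := ne_of_lt hjk
    refine ⟨j, k, hjk, ?_⟩
    have key : ∀ i, ((2:ℝ) • α) (e i) = (n i : ℝ) := h2α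
    rcases hvj with hj | hj <;> rcases hvk with hk | hk
    · left
      apply hext; intro i
      rw [h2α i, LinearMap.add_apply, hdual j i, hdual k i]
      by_cases hij : i = j
      · subst hij; rw [hj]; simp [hjk', Ne.symm hjk']
      · by_cases hik : i = k
        · subst hik; rw [hk]; simp [hjk', Ne.symm hjk']
        · rw [hz i hij hik]; simp [Ne.symm hij, Ne.symm hik]
    · right; right; left
      apply hext; intro i
      rw [h2α i, LinearMap.sub_apply, hdual j i, hdual k i]
      by_cases hij : i = j
      · subst hij; rw [hj]; simp [hjk', Ne.symm hjk']
      · by_cases hik : i = k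
        · subst hik; rw [hk]; simp [hjk', Ne.symm hjk']
        · rw [hz i hij hik]; simp [Ne.symm hij, Ne.symm hik]
    · right; right; right
      apply hext; intro i
      rw [h2α i, LinearMap.neg_apply, LinearMap.sub_apply, hdual j i, hdual k i]
      by_cases hij : i = j
      · subst hij; rw [hj]; simp [hjk', Ne.symm hjk']
      · by_cases hik : i = k
        · subst hik; rw [hk]; simp [hjk', Ne.symm hjk']
        · rw [hz i hij hik]; simp [Ne.symm hij, Ne.symm hik]
    · right; left
      apply hext; intro i
      rw [h2α i, LinearMap.neg_apply, LinearMap.add_apply, hdual j i, hdual k i]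
      by_cases hij : i = j
      · subst hij; rw [hj]; simp [hjk', Ne.symm hjk']
      · by_cases hik : i = k
        · subst hik; rw [hk]; simp [hjk', Ne.symm hjk']
        · rw [hz i hij hik]; simp [Ne.symm hij, Ne.symm hik]
end

section
/- Assume all basis vectors have the same length: ‖e_i‖ = L for all i. Let R ⊆ V* ∖ {0} be a finite set such that 2R ⊆ {±ε_j, ±2ε_j : 1 ≤ j ≤ r} ∪ {±(ε_j + ε_k), ±(ε_j − ε_k) : 1 ≤ j < k ≤ r}, let W be the subgroup of the orthogonal group of V generated by the reflections s_α with α ∈ R, and assume: (a) R is W-invariant, i.e. α ∘ w⁻¹ ∈ R for all α ∈ R and w ∈ W; (b) for every j ∈ {1, …, r} one has {±e₁, …, ±e_r} ⊆ W(e_j) ∪ W(−e_j). Then there exist signs λ₁, …, λ_r ∈ {1, −1} such that, setting ε'_j := λ_jε_j, the set 2R equals one of the following five sets: {ε'_j − ε'_k : 1 ≤ j ≠ k ≤ r} (type A_{r−1}); {±ε'_j : 1 ≤ j ≤ r} ∪ {±ε'_j ± ε'_k : 1 ≤ j < k ≤ r} (type B_r); {±2ε'_j : 1 ≤ j ≤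 r} ∪ {±ε'_j ± ε'_k : 1 ≤ j < k ≤ r} (type C_r); {±ε'_j ± ε'_k : 1 ≤ j < k ≤ r} (type D_r); {±ε'_j, ±2ε'_j : 1 ≤ j ≤ r} ∪ {±ε'_j ± ε'_k : 1 ≤ j < k ≤ r} (type BC_r). -/
open scoped RealInnerProductSpace

/-- The set `{±ε'_j : 1 ≤ j ≤ r}` (short roots, doubled). -/
def setShort {M : Type*} [AddCommGroup M] [Module ℝ M] {r : ℕ} (ε' : Fin r → M) : Set M :=
  {φ | ∃ j, φ = ε' j ∨ φ = -ε' j}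

/-- The set `{±2ε'_j : 1 ≤ j ≤ r}` (long roots, doubled). -/
def setLong {M : Type*} [AddCommGroup M] [Module ℝ M] {r : ℕ} (ε' : Fin r → M) : Set M :=
  {φ | ∃ j, φ = (2 : ℝ) • ε' j ∨ φ = -((2 : ℝ) • ε' j)}

/-- The set `{±ε'_j ± ε'_k : 1 ≤ j < k ≤ r}` (doubled). -/
def setPair {M : Type*} [AddCommGroup M] [Module ℝ M] {r : ℕ} (ε' : Fin r → M) : Set M :=
  {φ | ∃ j k, j < k ∧ (φ = ε' j + ε' k ∨ φ = -(ε' j + ε' k) ∨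
    φ = ε' j - ε' k ∨ φ = -(ε' j - ε' k))}

/-- The set `{ε'_j − ε'_k : 1 ≤ j ≠ k ≤ r}` (type `A_{r−1}`, doubled). -/
def setTypeA {M : Type*} [AddCommGroup M] [Module ℝ M] {r : ℕ} (ε' : Fin r → M) : Set M :=
  {φ | ∃ j k, j ≠ k ∧ φ = ε' j - ε' k}


lemma exists_refl {V : Type*} [NormedAddCommGroup V] [InnerProductSpace ℝ V]
    (v : V) (hv : v ≠ 0) (α : Module.Dual ℝ V) (hαv : ∀ H, α H = ⟪v, H⟫) :
    ∃ w : V ≃ₗᵢ[ℝ] V, (∀ H, w H = H - α H • ((2 / ‖v‖ ^ 2) • v)) ∧ w * w = 1 := by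
  have hn : ‖v‖ ^ 2 ≠ 0 := pow_ne_zero _ (norm_ne_zero_iff.mpr hv)
  set c : ℝ := 2 / ‖v‖ ^ 2 with hc
  set f : V →ₗ[ℝ] V := LinearMap.id - c • (α.smulRight v) with hf
  have hfa : ∀ H, f H = H - (c * α H) • v := by
    intro H
    simp only [hf, LinearMap.sub_apply, LinearMap.id_apply, LinearMap.smul_apply,
      LinearMap.smulRight_apply, smul_smul]
  have hav : α v = ‖v‖ ^ 2 := by rw [hαv, real_inner_self_eq_norm_sq]
  have hαf : ∀ H, α (f H) = - α H := by
    intro H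
    rw [hfa, map_sub, map_smul, smul_eq_mul, hav, hc]
    field_simp
    ring
  have hinv : Function.Involutive f := by
    intro H
    rw [hfa (f H), hαf, hfa, mul_neg, neg_smul, sub_neg_eq_add, sub_add_cancel]
  have hinner : ∀ x y, ⟪f x, f y⟫ = ⟪x, y⟫ := by
    intro x y
    rw [hfa, hfa, inner_sub_left, inner_sub_right, inner_sub_right]
    rw [real_inner_smul_left, real_inner_smul_left, real_inner_smul_right,
      real_inner_smul_right, hαv x, hαv y, real_inner_self_eq_norm_sq,
      real_inner_comm v x, hc]
    field_simp
    ring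
  refine ⟨(LinearEquiv.ofInvolutive f hinv).isometryOfInner (fun x y => hinner x y), ?_, ?_⟩
  · intro H
    show f H = _
    rw [hfa, smul_smul, mul_comm]
  · ext H
    show f (f H) = H
    exact hinv H

section Aux
variable {V : Type*} [NormedAddCommGroup V] [InnerProductSpace ℝ V]
variable {r : ℕ} {e : Fin r → V} {L : ℝ} {ε : Fin r → Module.Dual ℝ V}
variable {Riesz : Module.Dual ℝ V → V} {R : Set (Module.Dual ℝ V)}
variable {W : Subgroup (V ≃ₗᵢ[ℝ] V)}

lemma lm_ext (hspan : Submodule.span ℝ (Set.range e) = ⊤)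
    {f g : Module.Dual ℝ V} (h : ∀ i, f (e i) = g (e i)) : f = g :=
  LinearMap.ext_on hspan (by rintro x ⟨i, rfl⟩; exact h i)

lemma inner_e (horth : ∀ i j, i ≠ j → ⟪e i, e j⟫ = 0) (hlen : ∀ i, ‖e i‖ = L)
    (i j : Fin r) : ⟪e i, e j⟫ = if i = j then L ^ 2 else 0 := by
  split
  · next h => subst h; rw [real_inner_self_eq_norm_sq, hlen]
  · next h => exact horth i j h

lemma basis_eq_iff (he0 : ∀ i, e i ≠ 0) (horth : ∀ i j, i ≠ j → ⟪e i, e j⟫ = 0)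
    {i j : Fin r} (h : e i = e j ∨ e i = -e j) : i = j := by
  by_contra hne
  have h0 : ⟪e i, e j⟫ = 0 := horth i j hne
  have hp : (0:ℝ) < ⟪e j, e j⟫ := by
    rw [real_inner_self_eq_norm_sq]
    exact pow_pos (norm_pos_iff.mpr (he0 j)) 2
  rcases h with h | h <;> rw [h] at h0
  · exact absurd h0 (ne_of_gt hp)
  · rw [inner_neg_left] at h0
    exact absurd (neg_eq_zero.mp h0) (ne_of_gt hp)

lemma Riesz_ne (hRiesz : ∀ φ H, φ H = ⟪Riesz φ, H⟫)
    (hR0 : (0 : Module.Dual ℝ V) ∉ R) {α} (hα : α ∈ R) : Riesz α ≠ 0 := by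
  intro h
  apply hR0
  have : α = 0 := by
    ext H
    rw [hRiesz, h, inner_zero_left]; rfl
  rwa [this] at hα

lemma Riesz_eq (hspan : Submodule.span ℝ (Set.range e) = ⊤)
    (hRiesz : ∀ φ H, φ H = ⟪Riesz φ, H⟫) {φ : Module.Dual ℝ V} {v : V}
    (h : ∀ i, φ (e i) = ⟪v, e i⟫) : Riesz φ = v := by
  have key : ∀ y, ⟪Riesz φ - v, y⟫ = 0 := by
    intro y
    have hy : y ∈ Submodule.span ℝ (Set.range e) := by rw [hspan]; trivial
    induction hy using Submodule.span_induction with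
    | mem x hx =>
      obtain ⟨i, rfl⟩ := hx
      rw [inner_sub_left, ← hRiesz, h i, sub_self]
    | zero => simp
    | add x y _ _ hx hy => rw [inner_add_right, hx, hy, add_zero]
    | smul c x _ hx => rw [inner_smul_right, hx, mul_zero]
  have := key (Riesz φ - v)
  rw [inner_self_eq_zero, sub_eq_zero] at this
  exact this

lemma formula_invol (hRiesz : ∀ φ H, φ H = ⟪Riesz φ, H⟫) {α : Module.Dual ℝ V}
    {w : V ≃ₗᵢ[ℝ] V} (hv : Riesz α ≠ 0)
    (hwf : ∀ H, w H = H - α H • ((2 / ‖Riesz α‖ ^ 2) • Riesz α)) : w * w = 1 := by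
  have hn : ‖Riesz α‖ ^ 2 ≠ 0 := pow_ne_zero _ (norm_ne_zero_iff.mpr hv)
  have hav : α (Riesz α) = ‖Riesz α‖ ^ 2 := by rw [hRiesz, real_inner_self_eq_norm_sq]
  have hneg : ∀ H, α (w H) = - α H := by
    intro H
    rw [hwf, map_sub, map_smul, smul_eq_mul, map_smul, smul_eq_mul, hav]
    field_simp
    ring
  ext H
  show w (w H) = H
  rw [hwf (w H), hneg, hwf H, neg_smul, sub_neg_eq_add, sub_add_cancel]

lemma gen_mem (hW : W = Subgroup.closure {w : V ≃ₗᵢ[ℝ] V | ∃ α ∈ R,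
      ∀ H, w H = H - α H • ((2 / ‖Riesz α‖ ^ 2) • Riesz α)})
    (hRiesz : ∀ φ H, φ H = ⟪Riesz φ, H⟫)
    (hR0 : (0 : Module.Dual ℝ V) ∉ R) {α} (hα : α ∈ R) :
    ∃ w : V ≃ₗᵢ[ℝ] V, w ∈ W ∧ (∀ H, w H = H - α H • ((2 / ‖Riesz α‖ ^ 2) • Riesz α))
      ∧ w⁻¹ = w := by
  obtain ⟨w, hwf, -⟩ := exists_refl (Riesz α) (Riesz_ne hRiesz hR0 hα) α (hRiesz α)
  refine ⟨w, ?_, hwf, ?_⟩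
  · rw [hW]; exact Subgroup.subset_closure ⟨α, hα, hwf⟩
  · exact inv_eq_of_mul_eq_one_right (formula_invol hRiesz (Riesz_ne hRiesz hR0 hα) hwf)

lemma move2 (hspan : Submodule.span ℝ (Set.range e) = ⊤)
    (hWR : ∀ α ∈ R, ∀ w ∈ W, α.comp ((w⁻¹).toLinearEquiv : V →ₗ[ℝ] V) ∈ R)
    {φ ψ : Module.Dual ℝ V} {w : V ≃ₗᵢ[ℝ] V} (hw : w ∈ W)
    (hφ : ∃ α ∈ R, (2:ℝ) • α = φ) (h : ∀ i, φ (w⁻¹ (e i)) = ψ (e i)) :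
    ∃ α ∈ R, (2:ℝ) • α = ψ := by
  obtain ⟨α, hα, rfl⟩ := hφ
  refine ⟨α.comp ((w⁻¹).toLinearEquiv : V →ₗ[ℝ] V), hWR α hα w hw, ?_⟩
  apply lm_ext hspan
  intro i
  have := h i
  simp only [LinearMap.smul_apply, smul_eq_mul] at this ⊢
  rw [← this]
  rfl
lemma act_single (horth : ∀ i j, i ≠ j → ⟪e i, e j⟫ = 0) (hlen : ∀ i, ‖e i‖ = L)
    (hdual : ∀ i j, ε i (e j) = if i = j then 1 else 0)
    (hspan : Submodule.span ℝ (Set.range e) = ⊤)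
    (hRiesz : ∀ φ H, φ H = ⟪Riesz φ, H⟫) (hL : 0 < L)
    {α : Module.Dual ℝ V} {c : ℝ} {j : Fin r} {w : V ≃ₗᵢ[ℝ] V}
    (hc : c ≠ 0) (h2 : (2:ℝ) • α = c • ε j)
    (hwf : ∀ H, w H = H - α H • ((2 / ‖Riesz α‖ ^ 2) • Riesz α)) :
    w (e j) = -(e j) ∧ ∀ i, i ≠ j → w (e i) = e i := by
  have hLn : L ≠ 0 := ne_of_gt hL
  have hα : ∀ i, α (e i) = if j = i then c / 2 else 0 := by
    intro i
    have h := DFunLike.congr_fun h2 (e i)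
    simp only [LinearMap.smul_apply, smul_eq_mul, hdual] at h
    split
    · next hji => rw [hji] at h; rw [if_pos rfl] at h; linarith
    · next hji => rw [if_neg hji] at h; linarith
  have hv : Riesz α = (c / (2 * L ^ 2)) • e j := by
    apply Riesz_eq hspan hRiesz
    intro i
    rw [hα, real_inner_smul_left, inner_e horth hlen]
    split_ifs
    · field_simp
    · ring
  have hnv : ‖Riesz α‖ ^ 2 = c ^ 2 / (4 * L ^ 2) := by
    rw [← real_inner_self_eq_norm_sq, hv, real_inner_smul_left, real_inner_smul_right,
      inner_e horth hlen, if_pos rfl]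
    field_simp
    ring
  constructor
  · rw [hwf, hα, if_pos rfl, hnv, hv, smul_smul, smul_smul]
    have hq : c / 2 * (2 / (c ^ 2 / (4 * L ^ 2))) * (c / (2 * L ^ 2)) = 2 := by
      field_simp
      ring
    rw [hq, two_smul]
    abel
  · intro i hij
    rw [hwf, hα, if_neg (fun h => hij h.symm), zero_smul, sub_zero]

lemma act_pair (horth : ∀ i j, i ≠ j → ⟪e i, e j⟫ = 0) (hlen : ∀ i, ‖e i‖ = L)
    (hdual : ∀ i j, ε i (e j) = if i = j then 1 else 0)
    (hspan : Submodule.span ℝ (Set.range e) = ⊤)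
    (hRiesz : ∀ φ H, φ H = ⟪Riesz φ, H⟫) (hL : 0 < L)
    {α : Module.Dual ℝ V} {c s : ℝ} {j k : Fin r} {w : V ≃ₗᵢ[ℝ] V}
    (hc : c ≠ 0) (hs : s = 1 ∨ s = -1) (hjk : j ≠ k)
    (h2 : (2:ℝ) • α = c • (ε j + s • ε k))
    (hwf : ∀ H, w H = H - α H • ((2 / ‖Riesz α‖ ^ 2) • Riesz α)) :
    w (e j) = -(s • e k) ∧ w (e k) = -(s • e j) ∧
      ∀ i, i ≠ j → i ≠ k → w (e i) = e i := by
  have hLn : L ≠ 0 := ne_of_gt hL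
  have hs2 : s * s = 1 := by rcases hs with h | h <;> rw [h] <;> norm_num
  have hα : ∀ i, α (e i) =
      c / 2 * ((if j = i then 1 else 0) + s * (if k = i then 1 else 0)) := by
    intro i
    have h := DFunLike.congr_fun h2 (e i)
    simp only [LinearMap.smul_apply, LinearMap.add_apply, smul_eq_mul, hdual] at h
    linarith
  have hv : Riesz α = (c / (2 * L ^ 2)) • (e j + s • e k) := by
    apply Riesz_eq hspan hRiesz
    intro i
    rw [hα, real_inner_smul_left, inner_add_left, real_inner_smul_left,
      inner_e horth hlen, inner_e horth hlen]
    split_ifs with h1 h2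
    · exact absurd (h1.trans h2.symm) hjk
    · field_simp
      ring
    · next h2 =>
      field_simp
      ring
    · ring
  have hnv : ‖Riesz α‖ ^ 2 = c ^ 2 / (2 * L ^ 2) := by
    rw [← real_inner_self_eq_norm_sq, hv, real_inner_smul_left, real_inner_smul_right,
      inner_add_left, inner_add_right, inner_add_right, real_inner_smul_left,
      real_inner_smul_left, real_inner_smul_right, real_inner_smul_right,
      inner_e horth hlen, inner_e horth hlen, inner_e horth hlen, inner_e horth hlen,
      if_pos rfl, if_pos rfl, if_neg hjk, if_neg (Ne.symm hjk)]
    have h1 : s * (s * L ^ 2) = L ^ 2 := by rw [← mul_assoc, hs2, one_mul]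
    rw [h1]
    field_simp
    ring
  have hqj : c / 2 * (1 + s * 0) * (2 / (c ^ 2 / (2 * L ^ 2))) * (c / (2 * L ^ 2)) = 1 := by
    field_simp
    ring
  have hqk : c / 2 * (0 + s * 1) * (2 / (c ^ 2 / (2 * L ^ 2))) * (c / (2 * L ^ 2)) = s := by
    field_simp
    ring
  refine ⟨?_, ?_, ?_⟩
  · rw [hwf, hα, if_pos rfl, if_neg (Ne.symm hjk), hnv, hv, smul_smul, smul_smul, hqj,
      one_smul]
    abel
  · rw [hwf, hα, if_neg hjk, if_pos rfl, hnv, hv, smul_smul, smul_smul, hqk,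
      smul_add, smul_smul, hs2, one_smul]
    abel
  · intro i hij hik
    rw [hwf, hα, if_neg (fun h => hij h.symm), if_neg (fun h => hik h.symm)]
    norm_num

end Aux
def mem2 {V : Type*} [NormedAddCommGroup V] [InnerProductSpace ℝ V]
    (R : Set (Module.Dual ℝ V)) (φ : Module.Dual ℝ V) : Prop :=
  ∃ α ∈ R, (2:ℝ) • α = φ


section Aux2
variable {V : Type*} [NormedAddCommGroup V] [InnerProductSpace ℝ V]
variable {r : ℕ} {e : Fin r → V} {L : ℝ} {ε : Fin r → Module.Dual ℝ V}
variable {Riesz : Module.Dual ℝ V → V} {R : Set (Module.Dual ℝ V)}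
variable {W : Subgroup (V ≃ₗᵢ[ℝ] V)}

lemma neg2 (hspan : Submodule.span ℝ (Set.range e) = ⊤)
    (hRiesz : ∀ φ H, φ H = ⟪Riesz φ, H⟫)
    (hR0 : (0 : Module.Dual ℝ V) ∉ R)
    (hW : W = Subgroup.closure {w : V ≃ₗᵢ[ℝ] V | ∃ α ∈ R,
      ∀ H, w H = H - α H • ((2 / ‖Riesz α‖ ^ 2) • Riesz α)})
    (hWR : ∀ α ∈ R, ∀ w ∈ W, α.comp ((w⁻¹).toLinearEquiv : V →ₗ[ℝ] V) ∈ R)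
    {φ : Module.Dual ℝ V} (hφ : mem2 R φ) : mem2 R (-φ) := by
  obtain ⟨α, hα, rfl⟩ := hφ
  obtain ⟨w, hwW, hwf, hwinv⟩ := gen_mem hW hRiesz hR0 hα
  have hvne : Riesz α ≠ 0 := Riesz_ne hRiesz hR0 hα
  have hn : ‖Riesz α‖ ^ 2 ≠ 0 := pow_ne_zero _ (norm_ne_zero_iff.mpr hvne)
  have hav : α (Riesz α) = ‖Riesz α‖ ^ 2 := by rw [hRiesz, real_inner_self_eq_norm_sq]
  apply move2 hspan hWR hwW ⟨α, hα, rfl⟩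
  intro i
  rw [hwinv, hwf (e i)]
  simp only [map_sub, map_smul, LinearMap.smul_apply, LinearMap.neg_apply,
    smul_eq_mul, hav]
  field_simp
  ring

lemma move2i (hspan : Submodule.span ℝ (Set.range e) = ⊤)
    (hWR : ∀ α ∈ R, ∀ w ∈ W, α.comp ((w⁻¹).toLinearEquiv : V →ₗ[ℝ] V) ∈ R)
    {φ ψ : Module.Dual ℝ V} {w : V ≃ₗᵢ[ℝ] V} (hw : w ∈ W) (hwi : w⁻¹ = w)
    (hφ : mem2 R φ) (h : ∀ i, φ (w (e i)) = ψ (e i)) : mem2 R ψ := by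
  apply move2 hspan hWR hw hφ
  intro i
  rw [hwi]
  exact h i

lemma swap_ex (horth : ∀ i j, i ≠ j → ⟪e i, e j⟫ = 0) (hlen : ∀ i, ‖e i‖ = L)
    (hdual : ∀ i j, ε i (e j) = if i = j then 1 else 0)
    (hspan : Submodule.span ℝ (Set.range e) = ⊤)
    (hRiesz : ∀ φ H, φ H = ⟪Riesz φ, H⟫) (hL : 0 < L)
    (hR0 : (0 : Module.Dual ℝ V) ∉ R)
    (hW : W = Subgroup.closure {w : V ≃ₗᵢ[ℝ] V | ∃ α ∈ R,
      ∀ H, w H = H - α H • ((2 / ‖Riesz α‖ ^ 2) • Riesz α)})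
    {j k : Fin r} (hjk : j ≠ k) (hm : mem2 R (ε j - ε k)) :
    ∃ w : V ≃ₗᵢ[ℝ] V, w ∈ W ∧ w⁻¹ = w ∧ w (e j) = e k ∧ w (e k) = e j ∧
      ∀ i, i ≠ j → i ≠ k → w (e i) = e i := by
  obtain ⟨α, hα, h2⟩ := hm
  obtain ⟨w, hwW, hwf, hwinv⟩ := gen_mem hW hRiesz hR0 hα
  have h2' : (2:ℝ) • α = (1:ℝ) • (ε j + (-1:ℝ) • ε k) := by
    rw [h2]; module
  obtain ⟨ha, hb, hc⟩ := act_pair horth hlen hdual hspan hRiesz hL one_ne_zero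
    (Or.inr rfl) hjk h2' hwf
  rw [show -((-1:ℝ) • e k) = e k by module] at ha
  rw [show -((-1:ℝ) • e j) = e j by module] at hb
  exact ⟨w, hwW, hwinv, ha, hb, hc⟩

lemma aswap_ex (horth : ∀ i j, i ≠ j → ⟪e i, e j⟫ = 0) (hlen : ∀ i, ‖e i‖ = L)
    (hdual : ∀ i j, ε i (e j) = if i = j then 1 else 0)
    (hspan : Submodule.span ℝ (Set.range e) = ⊤)
    (hRiesz : ∀ φ H, φ H = ⟪Riesz φ, H⟫) (hL : 0 < L)
    (hR0 : (0 : Module.Dual ℝ V) ∉ R)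
    (hW : W = Subgroup.closure {w : V ≃ₗᵢ[ℝ] V | ∃ α ∈ R,
      ∀ H, w H = H - α H • ((2 / ‖Riesz α‖ ^ 2) • Riesz α)})
    {j k : Fin r} (hjk : j ≠ k) (hm : mem2 R (ε j + ε k)) :
    ∃ w : V ≃ₗᵢ[ℝ] V, w ∈ W ∧ w⁻¹ = w ∧ w (e j) = -e k ∧ w (e k) = -e j ∧
      ∀ i, i ≠ j → i ≠ k → w (e i) = e i := by
  obtain ⟨α, hα, h2⟩ := hm
  obtain ⟨w, hwW, hwf, hwinv⟩ := gen_mem hW hRiesz hR0 hα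
  have h2' : (2:ℝ) • α = (1:ℝ) • (ε j + (1:ℝ) • ε k) := by
    rw [h2]; module
  obtain ⟨ha, hb, hc⟩ := act_pair horth hlen hdual hspan hRiesz hL one_ne_zero
    (Or.inl rfl) hjk h2' hwf
  rw [show -((1:ℝ) • e k) = -e k by module] at ha
  rw [show -((1:ℝ) • e j) = -e j by module] at hb
  exact ⟨w, hwW, hwinv, ha, hb, hc⟩

lemma flip_ex (horth : ∀ i j, i ≠ j → ⟪e i, e j⟫ = 0) (hlen : ∀ i, ‖e i‖ = L)
    (hdual : ∀ i j, ε i (e j) = if i = j then 1 else 0)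
    (hspan : Submodule.span ℝ (Set.range e) = ⊤)
    (hRiesz : ∀ φ H, φ H = ⟪Riesz φ, H⟫) (hL : 0 < L)
    (hR0 : (0 : Module.Dual ℝ V) ∉ R)
    (hW : W = Subgroup.closure {w : V ≃ₗᵢ[ℝ] V | ∃ α ∈ R,
      ∀ H, w H = H - α H • ((2 / ‖Riesz α‖ ^ 2) • Riesz α)})
    {j : Fin r} (hm : mem2 R (ε j) ∨ mem2 R ((2:ℝ) • ε j)) :
    ∃ w : V ≃ₗᵢ[ℝ] V, w ∈ W ∧ w⁻¹ = w ∧ w (e j) = -e j ∧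
      ∀ i, i ≠ j → w (e i) = e i := by
  rcases hm with ⟨α, hα, h2⟩ | ⟨α, hα, h2⟩
  · obtain ⟨w, hwW, hwf, hwinv⟩ := gen_mem hW hRiesz hR0 hα
    have h2' : (2:ℝ) • α = (1:ℝ) • ε j := by rw [h2, one_smul]
    obtain ⟨ha, hb⟩ := act_single horth hlen hdual hspan hRiesz hL one_ne_zero h2' hwf
    exact ⟨w, hwW, hwinv, ha, hb⟩
  · obtain ⟨w, hwW, hwf, hwinv⟩ := gen_mem hW hRiesz hR0 hα
    obtain ⟨ha, hb⟩ := act_single horth hlen hdual hspan hRiesz hL two_ne_zero h2 hwf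
    exact ⟨w, hwW, hwinv, ha, hb⟩

end Aux2

def relP {V : Type*} [NormedAddCommGroup V] [InnerProductSpace ℝ V] {r : ℕ}
    (R : Set (Module.Dual ℝ V)) (ε : Fin r → Module.Dual ℝ V) (i j : Fin r) : Prop :=
  i = j ∨ (i ≠ j ∧ (mem2 R (ε i - ε j) ∨ mem2 R (ε i + ε j)))

section Aux3
variable {V : Type*} [NormedAddCommGroup V] [InnerProductSpace ℝ V]
variable {r : ℕ} {e : Fin r → V} {L : ℝ} {ε : Fin r → Module.Dual ℝ V}
variable {Riesz : Module.Dual ℝ V → V} {R : Set (Module.Dual ℝ V)}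
variable {W : Subgroup (V ≃ₗᵢ[ℝ] V)}

lemma tri1 (horth : ∀ i j, i ≠ j → ⟪e i, e j⟫ = 0) (hlen : ∀ i, ‖e i‖ = L)
    (hdual : ∀ i j, ε i (e j) = if i = j then 1 else 0)
    (hspan : Submodule.span ℝ (Set.range e) = ⊤)
    (hRiesz : ∀ φ H, φ H = ⟪Riesz φ, H⟫) (hL : 0 < L)
    (hR0 : (0 : Module.Dual ℝ V) ∉ R)
    (hW : W = Subgroup.closure {w : V ≃ₗᵢ[ℝ] V | ∃ α ∈ R,
      ∀ H, w H = H - α H • ((2 / ‖Riesz α‖ ^ 2) • Riesz α)})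
    (hWR : ∀ α ∈ R, ∀ w ∈ W, α.comp ((w⁻¹).toLinearEquiv : V →ₗ[ℝ] V) ∈ R)
    {a b c : Fin r} (hab : a ≠ b) (hbc : b ≠ c) (hac : a ≠ c)
    (h1 : mem2 R (ε a - ε b)) (h2 : mem2 R (ε b - ε c)) : mem2 R (ε a - ε c) := by
  obtain ⟨w, hwW, hwi, hwa, hwb, hwo⟩ := swap_ex horth hlen hdual hspan hRiesz hL hR0 hW hab h1
  apply move2i hspan hWR hwW hwi h2
  intro m
  rcases eq_or_ne m a with rfl | hma
  · rw [hwa]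
    simp [LinearMap.sub_apply, hdual, hab, hbc, hac, Ne.symm hab, Ne.symm hbc, Ne.symm hac]
  rcases eq_or_ne m b with rfl | hmb
  · rw [hwb]
    simp [LinearMap.sub_apply, hdual, hab, hbc, hac, Ne.symm hab, Ne.symm hbc, Ne.symm hac]
  · rw [hwo m hma hmb]
    simp [LinearMap.sub_apply, hdual, Ne.symm hma, Ne.symm hmb]

lemma tri2 (horth : ∀ i j, i ≠ j → ⟪e i, e j⟫ = 0) (hlen : ∀ i, ‖e i‖ = L)
    (hdual : ∀ i j, ε i (e j) = if i = j then 1 else 0)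
    (hspan : Submodule.span ℝ (Set.range e) = ⊤)
    (hRiesz : ∀ φ H, φ H = ⟪Riesz φ, H⟫) (hL : 0 < L)
    (hR0 : (0 : Module.Dual ℝ V) ∉ R)
    (hW : W = Subgroup.closure {w : V ≃ₗᵢ[ℝ] V | ∃ α ∈ R,
      ∀ H, w H = H - α H • ((2 / ‖Riesz α‖ ^ 2) • Riesz α)})
    (hWR : ∀ α ∈ R, ∀ w ∈ W, α.comp ((w⁻¹).toLinearEquiv : V →ₗ[ℝ] V) ∈ R)
    {a b c : Fin r} (hab : a ≠ b) (hbc : b ≠ c) (hac : a ≠ c)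
    (h1 : mem2 R (ε a - ε b)) (h2 : mem2 R (ε b + ε c)) : mem2 R (ε a + ε c) := by
  obtain ⟨w, hwW, hwi, hwa, hwb, hwo⟩ := swap_ex horth hlen hdual hspan hRiesz hL hR0 hW hab h1
  apply move2i hspan hWR hwW hwi h2
  intro m
  rcases eq_or_ne m a with rfl | hma
  · rw [hwa]
    simp [LinearMap.add_apply, hdual, hab, hbc, hac, Ne.symm hab, Ne.symm hbc, Ne.symm hac]
  rcases eq_or_ne m b with rfl | hmb
  · rw [hwb]
    simp [LinearMap.add_apply, hdual, hab, hbc, hac, Ne.symm hab, Ne.symm hbc, Ne.symm hac]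
  · rw [hwo m hma hmb]
    simp [LinearMap.add_apply, hdual, Ne.symm hma, Ne.symm hmb]

lemma tri3 (horth : ∀ i j, i ≠ j → ⟪e i, e j⟫ = 0) (hlen : ∀ i, ‖e i‖ = L)
    (hdual : ∀ i j, ε i (e j) = if i = j then 1 else 0)
    (hspan : Submodule.span ℝ (Set.range e) = ⊤)
    (hRiesz : ∀ φ H, φ H = ⟪Riesz φ, H⟫) (hL : 0 < L)
    (hR0 : (0 : Module.Dual ℝ V) ∉ R)
    (hW : W = Subgroup.closure {w : V ≃ₗᵢ[ℝ] V | ∃ α ∈ R,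
      ∀ H, w H = H - α H • ((2 / ‖Riesz α‖ ^ 2) • Riesz α)})
    (hWR : ∀ α ∈ R, ∀ w ∈ W, α.comp ((w⁻¹).toLinearEquiv : V →ₗ[ℝ] V) ∈ R)
    {a b c : Fin r} (hab : a ≠ b) (hbc : b ≠ c) (hac : a ≠ c)
    (h1 : mem2 R (ε a + ε b)) (h2 : mem2 R (ε b - ε c)) : mem2 R (ε a + ε c) := by
  obtain ⟨w, hwW, hwi, hwa, hwb, hwo⟩ := aswap_ex horth hlen hdual hspan hRiesz hL hR0 hW hab h1
  have key : mem2 R (-(ε a + ε c)) := by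
    apply move2i hspan hWR hwW hwi h2
    intro m
    rcases eq_or_ne m a with rfl | hma
    · rw [hwa]
      simp [LinearMap.sub_apply, LinearMap.add_apply, LinearMap.neg_apply, hdual,
        hab, hbc, hac, Ne.symm hab, Ne.symm hbc, Ne.symm hac]
    rcases eq_or_ne m b with rfl | hmb
    · rw [hwb]
      simp [LinearMap.sub_apply, LinearMap.add_apply, LinearMap.neg_apply, hdual,
        hab, hbc, hac, Ne.symm hab, Ne.symm hbc, Ne.symm hac]
    · rw [hwo m hma hmb]
      simp [LinearMap.sub_apply, LinearMap.add_apply, LinearMap.neg_apply, hdual,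
        Ne.symm hma, Ne.symm hmb]
  have := neg2 hspan hRiesz hR0 hW hWR key
  rwa [neg_neg] at this

lemma tri4 (horth : ∀ i j, i ≠ j → ⟪e i, e j⟫ = 0) (hlen : ∀ i, ‖e i‖ = L)
    (hdual : ∀ i j, ε i (e j) = if i = j then 1 else 0)
    (hspan : Submodule.span ℝ (Set.range e) = ⊤)
    (hRiesz : ∀ φ H, φ H = ⟪Riesz φ, H⟫) (hL : 0 < L)
    (hR0 : (0 : Module.Dual ℝ V) ∉ R)
    (hW : W = Subgroup.closure {w : V ≃ₗᵢ[ℝ] V | ∃ α ∈ R,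
      ∀ H, w H = H - α H • ((2 / ‖Riesz α‖ ^ 2) • Riesz α)})
    (hWR : ∀ α ∈ R, ∀ w ∈ W, α.comp ((w⁻¹).toLinearEquiv : V →ₗ[ℝ] V) ∈ R)
    {a b c : Fin r} (hab : a ≠ b) (hbc : b ≠ c) (hac : a ≠ c)
    (h1 : mem2 R (ε a + ε b)) (h2 : mem2 R (ε b + ε c)) : mem2 R (ε a - ε c) := by
  obtain ⟨w, hwW, hwi, hwa, hwb, hwo⟩ := aswap_ex horth hlen hdual hspan hRiesz hL hR0 hW hab h1
  have key : mem2 R (-(ε a - ε c)) := by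
    apply move2i hspan hWR hwW hwi h2
    intro m
    rcases eq_or_ne m a with rfl | hma
    · rw [hwa]
      simp [LinearMap.sub_apply, LinearMap.add_apply, LinearMap.neg_apply, hdual,
        hab, hbc, hac, Ne.symm hab, Ne.symm hbc, Ne.symm hac]
    rcases eq_or_ne m b with rfl | hmb
    · rw [hwb]
      simp [LinearMap.sub_apply, LinearMap.add_apply, LinearMap.neg_apply, hdual,
        hab, hbc, hac, Ne.symm hab, Ne.symm hbc, Ne.symm hac]
    · rw [hwo m hma hmb]
      simp [LinearMap.sub_apply, LinearMap.add_apply, LinearMap.neg_apply, hdual,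
        Ne.symm hma, Ne.symm hmb]
  have := neg2 hspan hRiesz hR0 hW hWR key
  rwa [neg_neg] at this

lemma rel_symm (hspan : Submodule.span ℝ (Set.range e) = ⊤)
    (hRiesz : ∀ φ H, φ H = ⟪Riesz φ, H⟫)
    (hR0 : (0 : Module.Dual ℝ V) ∉ R)
    (hW : W = Subgroup.closure {w : V ≃ₗᵢ[ℝ] V | ∃ α ∈ R,
      ∀ H, w H = H - α H • ((2 / ‖Riesz α‖ ^ 2) • Riesz α)})
    (hWR : ∀ α ∈ R, ∀ w ∈ W, α.comp ((w⁻¹).toLinearEquiv : V →ₗ[ℝ] V) ∈ R)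
    {i j : Fin r} (h : relP R ε i j) : relP R ε j i := by
  rcases h with rfl | ⟨hij, hm | hp⟩
  · exact Or.inl rfl
  · refine Or.inr ⟨hij.symm, Or.inl ?_⟩
    have := neg2 hspan hRiesz hR0 hW hWR hm
    rwa [neg_sub] at this
  · refine Or.inr ⟨hij.symm, Or.inr ?_⟩
    rwa [add_comm] at hp
end Aux3

section Aux4
variable {V : Type*} [NormedAddCommGroup V] [InnerProductSpace ℝ V]
variable {r : ℕ} {e : Fin r → V} {L : ℝ} {ε : Fin r → Module.Dual ℝ V}
variable {Riesz : Module.Dual ℝ V → V} {R : Set (Module.Dual ℝ V)}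
variable {W : Subgroup (V ≃ₗᵢ[ℝ] V)}

lemma rel_trans (horth : ∀ i j, i ≠ j → ⟪e i, e j⟫ = 0) (hlen : ∀ i, ‖e i‖ = L)
    (hdual : ∀ i j, ε i (e j) = if i = j then 1 else 0)
    (hspan : Submodule.span ℝ (Set.range e) = ⊤)
    (hRiesz : ∀ φ H, φ H = ⟪Riesz φ, H⟫) (hL : 0 < L)
    (hR0 : (0 : Module.Dual ℝ V) ∉ R)
    (hW : W = Subgroup.closure {w : V ≃ₗᵢ[ℝ] V | ∃ α ∈ R,
      ∀ H, w H = H - α H • ((2 / ‖Riesz α‖ ^ 2) • Riesz α)})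
    (hWR : ∀ α ∈ R, ∀ w ∈ W, α.comp ((w⁻¹).toLinearEquiv : V →ₗ[ℝ] V) ∈ R)
    {i j k : Fin r} (h1 : relP R ε i j) (h2 : relP R ε j k) : relP R ε i k := by
  rcases h1 with rfl | ⟨hij, h1⟩
  · exact h2
  rcases h2 with rfl | ⟨hjk, h2⟩
  · exact Or.inr ⟨hij, h1⟩
  rcases eq_or_ne i k with rfl | hik
  · exact Or.inl rfl
  refine Or.inr ⟨hik, ?_⟩
  rcases h1 with m1 | p1 <;> rcases h2 with m2 | p2
  · exact Or.inl (tri1 horth hlen hdual hspan hRiesz hL hR0 hW hWR hij hjk hik m1 m2)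
  · exact Or.inr (tri2 horth hlen hdual hspan hRiesz hL hR0 hW hWR hij hjk hik m1 p2)
  · exact Or.inr (tri3 horth hlen hdual hspan hRiesz hL hR0 hW hWR hij hjk hik p1 m2)
  · exact Or.inl (tri4 horth hlen hdual hspan hRiesz hL hR0 hW hWR hij hjk hik p1 p2)

lemma cp (he0 : ∀ i, e i ≠ 0) (horth : ∀ i j, i ≠ j → ⟪e i, e j⟫ = 0)
    (hlen : ∀ i, ‖e i‖ = L)
    (hdual : ∀ i j, ε i (e j) = if i = j then 1 else 0)
    (hspan : Submodule.span ℝ (Set.range e) = ⊤)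
    (hRiesz : ∀ φ H, φ H = ⟪Riesz φ, H⟫) (hL : 0 < L)
    (hR0 : (0 : Module.Dual ℝ V) ∉ R)
    (hRsub : ∀ α ∈ R,
      (∃ j, (2 : ℝ) • α = ε j ∨ (2 : ℝ) • α = -ε j ∨
        (2 : ℝ) • α = (2 : ℝ) • ε j ∨ (2 : ℝ) • α = -((2 : ℝ) • ε j)) ∨
      (∃ j k : Fin r, j < k ∧ ((2 : ℝ) • α = ε j + ε k ∨ (2 : ℝ) • α = -(ε j + ε k) ∨
        (2 : ℝ) • α = ε j - ε k ∨ (2 : ℝ) • α = -(ε j - ε k))))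
    (hW : W = Subgroup.closure {w : V ≃ₗᵢ[ℝ] V | ∃ α ∈ R,
      ∀ H, w H = H - α H • ((2 / ‖Riesz α‖ ^ 2) • Riesz α)})
    (hWR : ∀ α ∈ R, ∀ w ∈ W, α.comp ((w⁻¹).toLinearEquiv : V →ₗ[ℝ] V) ∈ R) :
    ∀ w ∈ W, ∀ i, ∃ j, relP R ε i j ∧ (w (e i) = e j ∨ w (e i) = -e j) := by
  intro w hw
  rw [hW] at hw
  induction hw using Subgroup.closure_induction with
  | one =>
    intro i
    exact ⟨i, Or.inl rfl, Or.inl rfl⟩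
  | mul x y hx hy px py =>
    intro i
    obtain ⟨j, rij, vj⟩ := py i
    obtain ⟨k, rjk, vk⟩ := px j
    refine ⟨k, rel_trans horth hlen hdual hspan hRiesz hL hR0 hW hWR rij rjk, ?_⟩
    have hxy : (x * y) (e i) = x (y (e i)) := rfl
    rcases vj with h | h <;> rcases vk with h' | h'
    · exact Or.inl (by rw [hxy, h, h'])
    · exact Or.inr (by rw [hxy, h, h'])
    · exact Or.inr (by rw [hxy, h, map_neg, h'])
    · exact Or.inl (by rw [hxy, h, map_neg, h', neg_neg])
  | inv x hx px =>
    intro i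
    choose f hrel hval using px
    have hinj : Function.Injective f := by
      intro i1 i2 h12
      have v1 := hval i1
      have v2 := hval i2
      rw [h12] at v1
      have hee : e i1 = e i2 ∨ e i1 = -e i2 := by
        rcases v1 with h1 | h1 <;> rcases v2 with h2 | h2
        · exact Or.inl (x.injective (h1.trans h2.symm))
        · refine Or.inr (x.injective ?_)
          rw [h1, map_neg, h2, neg_neg]
        · refine Or.inr (x.injective ?_)
          rw [h1, map_neg, h2]
        · exact Or.inl (x.injective (by rw [h1, h2]))
      exact basis_eq_iff he0 horth hee
    obtain ⟨j, hj⟩ := Finite.injective_iff_surjective.mp hinj i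
    have hvj := hval j
    rw [hj] at hvj
    have hrelji : relP R ε j i := hj ▸ hrel j
    refine ⟨j, rel_symm hspan hRiesz hR0 hW hWR hrelji, ?_⟩
    rcases hvj with h | h
    · left
      have h2 : x⁻¹ (x (e j)) = x⁻¹ (e i) := by rw [h]
      simpa using h2.symm
    · right
      have h2 : x⁻¹ (x (e j)) = x⁻¹ (-e i) := by rw [h]
      simp only [map_neg] at h2
      have h3 : e j = -(x⁻¹ (e i)) := by simpa using h2
      exact neg_eq_iff_eq_neg.mp h3.symm
  | mem x hx =>
    obtain ⟨α, hα, hwf⟩ := hx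
    rcases hRsub α hα with ⟨j, hforms⟩ | ⟨j, k, hjk, hforms⟩
    · have hact : x (e j) = -e j ∧ ∀ i, i ≠ j → x (e i) = e i := by
        rcases hforms with h | h | h | h
        · exact act_single horth hlen hdual hspan hRiesz hL one_ne_zero
            (show (2:ℝ) • α = (1:ℝ) • ε j by rw [h]; module) hwf
        · exact act_single horth hlen hdual hspan hRiesz hL (by norm_num : (-1:ℝ) ≠ 0)
            (show (2:ℝ) • α = (-1:ℝ) • ε j by rw [h]; module) hwf
        · exact act_single horth hlen hdual hspan hRiesz hL two_ne_zero
            (show (2:ℝ) • α = (2:ℝ) • ε j by rw [h]) hwf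
        · exact act_single horth hlen hdual hspan hRiesz hL (by norm_num : (-2:ℝ) ≠ 0)
            (show (2:ℝ) • α = (-2:ℝ) • ε j by rw [h]; module) hwf
      intro i
      rcases eq_or_ne i j with rfl | hij
      · exact ⟨i, Or.inl rfl, Or.inr hact.1⟩
      · exact ⟨i, Or.inl rfl, Or.inl (hact.2 i hij)⟩
    · have hjk' : j ≠ k := ne_of_lt hjk
      have key : ∃ s : ℝ, (s = 1 ∨ s = -1) ∧ x (e j) = -(s • e k) ∧ x (e k) = -(s • e j) ∧
          (∀ i, i ≠ j → i ≠ k → x (e i) = e i) ∧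
          (mem2 R (ε j - ε k) ∨ mem2 R (ε j + ε k)) := by
        rcases hforms with h | h | h | h
        · obtain ⟨ha, hb, hc⟩ := act_pair horth hlen hdual hspan hRiesz hL one_ne_zero
            (Or.inl rfl) hjk' (show (2:ℝ) • α = (1:ℝ) • (ε j + (1:ℝ) • ε k) by rw [h]; module) hwf
          exact ⟨1, Or.inl rfl, ha, hb, hc, Or.inr ⟨α, hα, h⟩⟩
        · obtain ⟨ha, hb, hc⟩ := act_pair horth hlen hdual hspan hRiesz hL
            (by norm_num : (-1:ℝ) ≠ 0) (Or.inl rfl) hjk'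
            (show (2:ℝ) • α = (-1:ℝ) • (ε j + (1:ℝ) • ε k) by rw [h]; module) hwf
          have hmm := neg2 hspan hRiesz hR0 hW hWR ⟨α, hα, h⟩
          rw [neg_neg] at hmm
          exact ⟨1, Or.inl rfl, ha, hb, hc, Or.inr hmm⟩
        · obtain ⟨ha, hb, hc⟩ := act_pair horth hlen hdual hspan hRiesz hL one_ne_zero
            (Or.inr rfl) hjk'
            (show (2:ℝ) • α = (1:ℝ) • (ε j + (-1:ℝ) • ε k) by rw [h]; module) hwf
          exact ⟨-1, Or.inr rfl, ha, hb, hc, Or.inl ⟨α, hα, h⟩⟩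
        · obtain ⟨ha, hb, hc⟩ := act_pair horth hlen hdual hspan hRiesz hL
            (by norm_num : (-1:ℝ) ≠ 0) (Or.inr rfl) hjk'
            (show (2:ℝ) • α = (-1:ℝ) • (ε j + (-1:ℝ) • ε k) by rw [h]; module) hwf
          have hmm := neg2 hspan hRiesz hR0 hW hWR ⟨α, hα, h⟩
          rw [neg_neg] at hmm
          exact ⟨-1, Or.inr rfl, ha, hb, hc, Or.inl hmm⟩
      obtain ⟨s, hs, hxj, hxk, hfix, hedge⟩ := key
      have hrjk : relP R ε j k := Or.inr ⟨hjk', hedge⟩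
      intro i
      rcases eq_or_ne i j with rfl | hij
      · refine ⟨k, hrjk, ?_⟩
        rcases hs with rfl | rfl
        · right
          rw [hxj, one_smul]
        · left
          rw [hxj]
          module
      rcases eq_or_ne i k with rfl | hik
      · refine ⟨j, rel_symm hspan hRiesz hR0 hW hWR hrjk, ?_⟩
        rcases hs with rfl | rfl
        · right
          rw [hxk, one_smul]
        · left
          rw [hxk]
          module
      · exact ⟨i, Or.inl rfl, Or.inl (hfix i hij hik)⟩

lemma rel_all (he0 : ∀ i, e i ≠ 0) (horth : ∀ i j, i ≠ j → ⟪e i, e j⟫ = 0)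
    (hlen : ∀ i, ‖e i‖ = L)
    (hdual : ∀ i j, ε i (e j) = if i = j then 1 else 0)
    (hspan : Submodule.span ℝ (Set.range e) = ⊤)
    (hRiesz : ∀ φ H, φ H = ⟪Riesz φ, H⟫) (hL : 0 < L)
    (hR0 : (0 : Module.Dual ℝ V) ∉ R)
    (hRsub : ∀ α ∈ R,
      (∃ j, (2 : ℝ) • α = ε j ∨ (2 : ℝ) • α = -ε j ∨
        (2 : ℝ) • α = (2 : ℝ) • ε j ∨ (2 : ℝ) • α = -((2 : ℝ) • ε j)) ∨
      (∃ j k : Fin r, j < k ∧ ((2 : ℝ) • α = ε j + ε k ∨ (2 : ℝ) • α = -(ε j + ε k) ∨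
        (2 : ℝ) • α = ε j - ε k ∨ (2 : ℝ) • α = -(ε j - ε k))))
    (hW : W = Subgroup.closure {w : V ≃ₗᵢ[ℝ] V | ∃ α ∈ R,
      ∀ H, w H = H - α H • ((2 / ‖Riesz α‖ ^ 2) • Riesz α)})
    (hWR : ∀ α ∈ R, ∀ w ∈ W, α.comp ((w⁻¹).toLinearEquiv : V →ₗ[ℝ] V) ∈ R)
    (hb : ∀ j i : Fin r,
      ((∃ w ∈ W, e i = w (e j)) ∨ (∃ w ∈ W, e i = w (-e j))) ∧
      ((∃ w ∈ W, -e i = w (e j)) ∨ (∃ w ∈ W, -e i = w (-e j)))) :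
    ∀ j i, relP R ε j i := by
  intro j i
  have hcp := cp he0 horth hlen hdual hspan hRiesz hL hR0 hRsub hW hWR
  rcases (hb j i).1 with ⟨w, hwW, hei⟩ | ⟨w, hwW, hei⟩
  · obtain ⟨k, hrel, hv⟩ := hcp w hwW j
    have hik : i = k := by
      apply basis_eq_iff he0 horth
      rcases hv with h | h
      · exact Or.inl (hei.trans h)
      · exact Or.inr (hei.trans h)
    subst hik
    exact hrel
  · obtain ⟨k, hrel, hv⟩ := hcp w hwW j
    rw [map_neg] at hei
    have hik : i = k := by
      apply basis_eq_iff he0 horth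
      rcases hv with h | h
      · exact Or.inr (by rw [hei, h])
      · exact Or.inl (by rw [hei, h, neg_neg])
    subst hik
    exact hrel
end Aux4

theorem stmt8
    {V : Type*} [NormedAddCommGroup V] [InnerProductSpace ℝ V] [FiniteDimensional ℝ V]
    {r : ℕ} (hr : 1 ≤ r) (hdim : Module.finrank ℝ V = r)
    (e : Fin r → V) (he0 : ∀ i, e i ≠ 0)
    (horth : ∀ i j, i ≠ j → ⟪e i, e j⟫ = 0)
    (hspan : Submodule.span ℝ (Set.range e) = ⊤)
    (L : ℝ) (hlen : ∀ i, ‖e i‖ = L)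
    (ε : Fin r → Module.Dual ℝ V) (hdual : ∀ i j, ε i (e j) = if i = j then 1 else 0)
    (Riesz : Module.Dual ℝ V → V) (hRiesz : ∀ φ H, φ H = ⟪Riesz φ, H⟫)
    (R : Set (Module.Dual ℝ V)) (hRfin : R.Finite) (hR0 : (0 : Module.Dual ℝ V) ∉ R)
    (hRsub : ∀ α ∈ R,
      (∃ j, (2 : ℝ) • α = ε j ∨ (2 : ℝ) • α = -ε j ∨
        (2 : ℝ) • α = (2 : ℝ) • ε j ∨ (2 : ℝ) • α = -((2 : ℝ) • ε j)) ∨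
      (∃ j k : Fin r, j < k ∧ ((2 : ℝ) • α = ε j + ε k ∨ (2 : ℝ) • α = -(ε j + ε k) ∨
        (2 : ℝ) • α = ε j - ε k ∨ (2 : ℝ) • α = -(ε j - ε k))))
    (W : Subgroup (V ≃ₗᵢ[ℝ] V))
    (hW : W = Subgroup.closure {w : V ≃ₗᵢ[ℝ] V | ∃ α ∈ R,
      ∀ H, w H = H - α H • ((2 / ‖Riesz α‖ ^ 2) • Riesz α)})
    (hWR : ∀ α ∈ R, ∀ w ∈ W, α.comp (w⁻¹.toLinearEquiv : V →ₗ[ℝ] V) ∈ R)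
    (hb : ∀ j i : Fin r,
      ((∃ w ∈ W, e i = w (e j)) ∨ (∃ w ∈ W, e i = w (-e j))) ∧
      ((∃ w ∈ W, -e i = w (e j)) ∨ (∃ w ∈ W, -e i = w (-e j)))) :
    ∃ lam : Fin r → ℝ, (∀ i, lam i = 1 ∨ lam i = -1) ∧
      ((fun α => (2 : ℝ) • α) '' R = setTypeA (fun j => lam j • ε j) ∨
       (fun α => (2 : ℝ) • α) '' R =
         setShort (fun j => lam j • ε j) ∪ setPair (fun j => lam j • ε j) ∨
       (fun α => (2 : ℝ) • α) '' R =
         setLong (fun j => lam j • ε j) ∪ setPair (fun j => lam j • ε j) ∨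
       (fun α => (2 : ℝ) • α) '' R = setPair (fun j => lam j • ε j) ∨
       (fun α => (2 : ℝ) • α) '' R =
         setShort (fun j => lam j • ε j) ∪ setLong (fun j => lam j • ε j) ∪
           setPair (fun j => lam j • ε j)) := by
  classical
  have hz : 0 < r := hr
  obtain ⟨z, hzval⟩ : ∃ z : Fin r, (z : ℕ) = 0 := ⟨⟨0, hz⟩, rfl⟩
  have hL : 0 < L := by
    rw [← hlen z]
    exact norm_pos_iff.mpr (he0 z)
  have himg : ∀ ψ, (ψ ∈ (fun α => (2:ℝ) • α) '' R ↔ mem2 R ψ) := by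
    intro ψ
    constructor
    · rintro ⟨α, hα, rfl⟩
      exact ⟨α, hα, rfl⟩
    · rintro ⟨α, hα, h⟩
      exact ⟨α, hα, h⟩
  have hneg : ∀ {φ}, mem2 R φ → mem2 R (-φ) :=
    fun h => neg2 hspan hRiesz hR0 hW hWR h
  rcases Nat.lt_or_ge r 2 with hr1 | hr2
  · -- case r = 1
    have hallz : ∀ i : Fin r, i = z := by
      intro i
      apply Fin.ext
      have := i.isLt
      omega
    have hforms : ∀ ψ, mem2 R ψ →
        (ψ = ε z ∨ ψ = -ε z ∨ ψ = (2:ℝ) • ε z ∨ ψ = -((2:ℝ) • ε z)) := by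
      rintro ψ ⟨α, hα, rfl⟩
      rcases hRsub α hα with ⟨j, h⟩ | ⟨j, k, hjk, -⟩
      · rw [hallz j] at h
        exact h
      · exact absurd ((hallz j).trans (hallz k).symm) (ne_of_lt hjk)
    have hnopair : ∀ ψ : Module.Dual ℝ V,
        (∃ j k : Fin r, j < k ∧ (ψ = ε j + ε k ∨ ψ = -(ε j + ε k) ∨
          ψ = ε j - ε k ∨ ψ = -(ε j - ε k))) → False := by
      rintro ψ ⟨j, k, hjk, -⟩
      exact absurd ((hallz j).trans (hallz k).symm) (ne_of_lt hjk)
    by_cases hS : mem2 R (ε z) <;> by_cases hLg : mem2 R ((2:ℝ) • ε z)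
    · -- BC₁
      refine ⟨fun _ => 1, fun i => Or.inl rfl, Or.inr (Or.inr (Or.inr (Or.inr ?_)))⟩
      ext ψ
      simp only [himg ψ, Set.mem_union, setShort, setLong, setPair, Set.mem_setOf_eq, one_smul]
      constructor
      · intro hm
        rcases hforms ψ hm with h | h | h | h
        · exact Or.inl (Or.inl ⟨z, Or.inl h⟩)
        · exact Or.inl (Or.inl ⟨z, Or.inr h⟩)
        · exact Or.inl (Or.inr ⟨z, Or.inl h⟩)
        · exact Or.inl (Or.inr ⟨z, Or.inr h⟩)
      · rintro ((⟨j, h | h⟩ | ⟨j, h | h⟩) | hp)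
        · rw [h, hallz j]; exact hS
        · rw [h, hallz j]; exact hneg hS
        · rw [h, hallz j]; exact hLg
        · rw [h, hallz j]; exact hneg hLg
        · exact absurd hp (fun hh => hnopair ψ hh)
    · -- B₁
      refine ⟨fun _ => 1, fun i => Or.inl rfl, Or.inr (Or.inl ?_)⟩
      ext ψ
      simp only [himg ψ, Set.mem_union, setShort, setPair, Set.mem_setOf_eq, one_smul]
      constructor
      · intro hm
        rcases hforms ψ hm with h | h | h | h
        · exact Or.inl ⟨z, Or.inl h⟩
        · exact Or.inl ⟨z, Or.inr h⟩
        · exact absurd (h ▸ hm) hLg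
        · exfalso
          apply hLg
          have := hneg hm
          rw [h, neg_neg] at this
          exact this
      · rintro (⟨j, h | h⟩ | hp)
        · rw [h, hallz j]; exact hS
        · rw [h, hallz j]; exact hneg hS
        · exact absurd hp (fun hh => hnopair ψ hh)
    · -- C₁
      refine ⟨fun _ => 1, fun i => Or.inl rfl, Or.inr (Or.inr (Or.inl ?_))⟩
      ext ψ
      simp only [himg ψ, Set.mem_union, setLong, setPair, Set.mem_setOf_eq, one_smul]
      constructor
      · intro hm
        rcases hforms ψ hm with h | h | h | h
        · exact absurd (h ▸ hm) hS
        · exfalso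
          apply hS
          have := hneg hm
          rw [h, neg_neg] at this
          exact this
        · exact Or.inl ⟨z, Or.inl h⟩
        · exact Or.inl ⟨z, Or.inr h⟩
      · rintro (⟨j, h | h⟩ | hp)
        · rw [h, hallz j]; exact hLg
        · rw [h, hallz j]; exact hneg hLg
        · exact absurd hp (fun hh => hnopair ψ hh)
    · -- A₀ (empty)
      refine ⟨fun _ => 1, fun i => Or.inl rfl, Or.inl ?_⟩
      ext ψ
      simp only [himg ψ, setTypeA, Set.mem_setOf_eq, one_smul]
      constructor
      · intro hm
        exfalso
        rcases hforms ψ hm with h | h | h | h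
        · exact hS (h ▸ hm)
        · apply hS
          have := hneg hm
          rw [h, neg_neg] at this
          exact this
        · exact hLg (h ▸ hm)
        · apply hLg
          have := hneg hm
          rw [h, neg_neg] at this
          exact this
      · rintro ⟨j, k, hjk, -⟩
        exact absurd ((hallz j).trans (hallz k).symm) hjk
  · -- case r ≥ 2
    obtain ⟨o, hoval⟩ : ∃ o : Fin r, (o : ℕ) = 1 := ⟨⟨1, hr2⟩, rfl⟩
    have hzo : z ≠ o := by
      intro h
      rw [h, hoval] at hzval
      exact absurd hzval one_ne_zero
    have hedge : ∀ i j : Fin r, i ≠ j → (mem2 R (ε i - ε j) ∨ mem2 R (ε i + ε j)) := by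
      intro i j hij
      rcases rel_all he0 horth hlen hdual hspan hRiesz hL hR0 hRsub hW hWR hb i j with
        rfl | ⟨-, h⟩
      · exact absurd rfl hij
      · exact h
    by_cases hfull : ∃ p q : Fin r, p ≠ q ∧ mem2 R (ε p - ε q) ∧ mem2 R (ε p + ε q)
    · -- Types D, B, C, BC
      have hdf : ∀ p q : Fin r, p ≠ q → mem2 R (ε p - ε q) → mem2 R (ε p + ε q) →
          ∃ w : V ≃ₗᵢ[ℝ] V, w ∈ W ∧ w⁻¹ (e p) = -e p ∧ w⁻¹ (e q) = -e q ∧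
            ∀ m, m ≠ p → m ≠ q → w⁻¹ (e m) = e m := by
        intro p q hpq hm hp
        obtain ⟨w1, hw1W, hw1i, h1p, h1q, h1o⟩ :=
          swap_ex horth hlen hdual hspan hRiesz hL hR0 hW hpq hm
        obtain ⟨w2, hw2W, hw2i, h2p, h2q, h2o⟩ :=
          aswap_ex horth hlen hdual hspan hRiesz hL hR0 hW hpq hp
        have hinv : (w1 * w2)⁻¹ = w2 * w1 := by rw [mul_inv_rev, hw1i, hw2i]
        refine ⟨w1 * w2, mul_mem hw1W hw2W, ?_, ?_, ?_⟩
        · rw [hinv]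
          show w2 (w1 (e p)) = -e p
          rw [h1p, h2q]
        · rw [hinv]
          show w2 (w1 (e q)) = -e q
          rw [h1q, h2p]
        · intro m hmp hmq
          rw [hinv]
          show w2 (w1 (e m)) = e m
          rw [h1o m hmp hmq, h2o m hmp hmq]
      have hspread : ∀ p q l : Fin r, p ≠ q → l ≠ p → l ≠ q →
          mem2 R (ε p - ε q) → mem2 R (ε p + ε q) →
          (mem2 R (ε p - ε l) ∧ mem2 R (ε p + ε l)) := by
        intro p q l hpq hlp hlq hm hp
        obtain ⟨w, hwW, hap, haq, hao⟩ := hdf p q hpq hm hp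
        have hpl : p ≠ l := fun h => hlp h.symm
        rcases hedge p l hpl with h | h
        · refine ⟨h, ?_⟩
          have key : mem2 R (-(ε p + ε l)) := by
            apply move2 hspan hWR hwW h
            intro m
            rcases eq_or_ne m p with rfl | hmp
            · rw [hap]
              simp [LinearMap.sub_apply, LinearMap.add_apply, LinearMap.neg_apply, map_neg,
                hdual, hpl, Ne.symm hpl]
            rcases eq_or_ne m q with rfl | hmq
            · rw [haq]
              simp [LinearMap.sub_apply, LinearMap.add_apply, LinearMap.neg_apply, map_neg,
                hdual, Ne.symm hpq, Ne.symm hlq, hlq]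
            · rw [hao m hmp hmq]
              simp [LinearMap.sub_apply, LinearMap.add_apply, LinearMap.neg_apply,
                hdual, Ne.symm hmp]
          have := hneg key
          rwa [neg_neg] at this
        · refine ⟨?_, h⟩
          have key : mem2 R (-(ε p - ε l)) := by
            apply move2 hspan hWR hwW h
            intro m
            rcases eq_or_ne m p with rfl | hmp
            · rw [hap]
              simp [LinearMap.sub_apply, LinearMap.add_apply, LinearMap.neg_apply, map_neg,
                hdual, hpl, Ne.symm hpl]
            rcases eq_or_ne m q with rfl | hmq
            · rw [haq]
              simp [LinearMap.sub_apply, LinearMap.add_apply, LinearMap.neg_apply, map_neg,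
                hdual, Ne.symm hpq, Ne.symm hlq, hlq]
            · rw [hao m hmp hmq]
              simp [LinearMap.sub_apply, LinearMap.add_apply, LinearMap.neg_apply,
                hdual, Ne.symm hmp]
          have := hneg key
          rwa [neg_neg] at this
      have hfsymm : ∀ p q : Fin r, mem2 R (ε p - ε q) → mem2 R (ε p + ε q) →
          mem2 R (ε q - ε p) ∧ mem2 R (ε q + ε p) := by
        intro p q hm hp
        constructor
        · have := hneg hm
          rwa [neg_sub] at this
        · rwa [add_comm] at hp
      obtain ⟨p, q, hpq, hpqm, hpqp⟩ := hfull
      have hfa : ∀ a b : Fin r, a ≠ b → mem2 R (ε a - ε b) ∧ mem2 R (ε a + ε b) := by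
        intro a b hab
        rcases eq_or_ne a p with rfl | hap
        · rcases eq_or_ne b q with rfl | hbq
          · exact ⟨hpqm, hpqp⟩
          · exact hspread a q b hpq hab.symm hbq hpqm hpqp
        rcases eq_or_ne a q with rfl | haq
        · obtain ⟨hm', hp'⟩ := hfsymm p a hpqm hpqp
          rcases eq_or_ne b p with rfl | hbp
          · exact ⟨hm', hp'⟩
          · exact hspread a p b (Ne.symm hpq) hab.symm hbp hm' hp'
        · obtain ⟨hm1, hp1⟩ := hspread p q a hpq hap haq hpqm hpqp
          obtain ⟨hm2, hp2⟩ := hfsymm p a hm1 hp1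
          rcases eq_or_ne b p with rfl | hbp
          · exact ⟨hm2, hp2⟩
          · exact hspread a p b hap hab.symm hbp hm2 hp2
      have hSall : (∃ j, mem2 R (ε j)) → ∀ j, mem2 R (ε j) := by
        rintro ⟨p', hp'⟩ j
        rcases eq_or_ne j p' with rfl | hjp
        · exact hp'
        · obtain ⟨w, hwW, hwi, hwa, hwb, hwo⟩ :=
            swap_ex horth hlen hdual hspan hRiesz hL hR0 hW (Ne.symm hjp)
              (hfa p' j (Ne.symm hjp)).1
          apply move2i hspan hWR hwW hwi hp'
          intro m
          rcases eq_or_ne m p' with rfl | hm1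
          · rw [hwa]
            simp [hdual, hjp, Ne.symm hjp]
          rcases eq_or_ne m j with rfl | hm2
          · rw [hwb]
            simp [hdual, hjp, Ne.symm hjp]
          · rw [hwo m hm1 hm2]
            simp [hdual, Ne.symm hm1, Ne.symm hm2]
      have hLall : (∃ j, mem2 R ((2:ℝ) • ε j)) → ∀ j, mem2 R ((2:ℝ) • ε j) := by
        rintro ⟨p', hp'⟩ j
        rcases eq_or_ne j p' with rfl | hjp
        · exact hp'
        · obtain ⟨w, hwW, hwi, hwa, hwb, hwo⟩ :=
            swap_ex horth hlen hdual hspan hRiesz hL hR0 hW (Ne.symm hjp)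
              (hfa p' j (Ne.symm hjp)).1
          apply move2i hspan hWR hwW hwi hp'
          intro m
          rcases eq_or_ne m p' with rfl | hm1
          · rw [hwa]
            simp [LinearMap.smul_apply, hdual, hjp, Ne.symm hjp]
          rcases eq_or_ne m j with rfl | hm2
          · rw [hwb]
            simp [LinearMap.smul_apply, hdual, hjp, Ne.symm hjp]
          · rw [hwo m hm1 hm2]
            simp [LinearMap.smul_apply, hdual, Ne.symm hm1, Ne.symm hm2]
      by_cases hSx : ∃ j, mem2 R (ε j) <;> by_cases hLx : ∃ j, mem2 R ((2:ℝ) • ε j)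
      · -- BC
        refine ⟨fun _ => 1, fun i => Or.inl rfl, Or.inr (Or.inr (Or.inr (Or.inr ?_)))⟩
        ext ψ
        simp only [himg ψ, Set.mem_union, setShort, setLong, setPair, Set.mem_setOf_eq, one_smul]
        constructor
        · rintro ⟨α, hα, rfl⟩
          rcases hRsub α hα with ⟨j, h | h | h | h⟩ | ⟨j, k, hjk, h | h | h | h⟩
          · exact Or.inl (Or.inl ⟨j, Or.inl h⟩)
          · exact Or.inl (Or.inl ⟨j, Or.inr h⟩)
          · exact Or.inl (Or.inr ⟨j, Or.inl h⟩)
          · exact Or.inl (Or.inr ⟨j, Or.inr h⟩)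
          · exact Or.inr ⟨j, k, hjk, Or.inl h⟩
          · exact Or.inr ⟨j, k, hjk, Or.inr (Or.inl h)⟩
          · exact Or.inr ⟨j, k, hjk, Or.inr (Or.inr (Or.inl h))⟩
          · exact Or.inr ⟨j, k, hjk, Or.inr (Or.inr (Or.inr h))⟩
        · rintro ((⟨j, h | h⟩ | ⟨j, h | h⟩) | ⟨j, k, hjk, h | h | h | h⟩)
          · rw [h]; exact hSall hSx j
          · rw [h]; exact hneg (hSall hSx j)
          · rw [h]; exact hLall hLx j
          · rw [h]; exact hneg (hLall hLx j)
          · rw [h]; exact (hfa j k (ne_of_lt hjk)).2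
          · rw [h]; exact hneg (hfa j k (ne_of_lt hjk)).2
          · rw [h]; exact (hfa j k (ne_of_lt hjk)).1
          · rw [h]; exact hneg (hfa j k (ne_of_lt hjk)).1
      · -- B
        refine ⟨fun _ => 1, fun i => Or.inl rfl, Or.inr (Or.inl ?_)⟩
        ext ψ
        simp only [himg ψ, Set.mem_union, setShort, setPair, Set.mem_setOf_eq, one_smul]
        constructor
        · rintro ⟨α, hα, rfl⟩
          rcases hRsub α hα with ⟨j, h | h | h | h⟩ | ⟨j, k, hjk, h | h | h | h⟩
          · exact Or.inl ⟨j, Or.inl h⟩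
          · exact Or.inl ⟨j, Or.inr h⟩
          · exact absurd ⟨j, ⟨α, hα, h⟩⟩ hLx
          · exfalso
            apply hLx
            have := hneg ⟨α, hα, h⟩
            rw [neg_neg] at this
            exact ⟨j, this⟩
          · exact Or.inr ⟨j, k, hjk, Or.inl h⟩
          · exact Or.inr ⟨j, k, hjk, Or.inr (Or.inl h)⟩
          · exact Or.inr ⟨j, k, hjk, Or.inr (Or.inr (Or.inl h))⟩
          · exact Or.inr ⟨j, k, hjk, Or.inr (Or.inr (Or.inr h))⟩
        · rintro (⟨j, h | h⟩ | ⟨j, k, hjk, h | h | h | h⟩)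
          · rw [h]; exact hSall hSx j
          · rw [h]; exact hneg (hSall hSx j)
          · rw [h]; exact (hfa j k (ne_of_lt hjk)).2
          · rw [h]; exact hneg (hfa j k (ne_of_lt hjk)).2
          · rw [h]; exact (hfa j k (ne_of_lt hjk)).1
          · rw [h]; exact hneg (hfa j k (ne_of_lt hjk)).1
      · -- C
        refine ⟨fun _ => 1, fun i => Or.inl rfl, Or.inr (Or.inr (Or.inl ?_))⟩
        ext ψ
        simp only [himg ψ, Set.mem_union, setLong, setPair, Set.mem_setOf_eq, one_smul]
        constructor
        · rintro ⟨α, hα, rfl⟩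
          rcases hRsub α hα with ⟨j, h | h | h | h⟩ | ⟨j, k, hjk, h | h | h | h⟩
          · exact absurd ⟨j, ⟨α, hα, h⟩⟩ hSx
          · exfalso
            apply hSx
            have := hneg ⟨α, hα, h⟩
            rw [neg_neg] at this
            exact ⟨j, this⟩
          · exact Or.inl ⟨j, Or.inl h⟩
          · exact Or.inl ⟨j, Or.inr h⟩
          · exact Or.inr ⟨j, k, hjk, Or.inl h⟩
          · exact Or.inr ⟨j, k, hjk, Or.inr (Or.inl h)⟩
          · exact Or.inr ⟨j, k, hjk, Or.inr (Or.inr (Or.inl h))⟩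
          · exact Or.inr ⟨j, k, hjk, Or.inr (Or.inr (Or.inr h))⟩
        · rintro (⟨j, h | h⟩ | ⟨j, k, hjk, h | h | h | h⟩)
          · rw [h]; exact hLall hLx j
          · rw [h]; exact hneg (hLall hLx j)
          · rw [h]; exact (hfa j k (ne_of_lt hjk)).2
          · rw [h]; exact hneg (hfa j k (ne_of_lt hjk)).2
          · rw [h]; exact (hfa j k (ne_of_lt hjk)).1
          · rw [h]; exact hneg (hfa j k (ne_of_lt hjk)).1
      · -- D
        refine ⟨fun _ => 1, fun i => Or.inl rfl, Or.inr (Or.inr (Or.inr (Or.inl ?_)))⟩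
        ext ψ
        simp only [himg ψ, setPair, Set.mem_setOf_eq, one_smul]
        constructor
        · rintro ⟨α, hα, rfl⟩
          rcases hRsub α hα with ⟨j, h | h | h | h⟩ | ⟨j, k, hjk, h | h | h | h⟩
          · exact absurd ⟨j, ⟨α, hα, h⟩⟩ hSx
          · exfalso
            apply hSx
            have := hneg ⟨α, hα, h⟩
            rw [neg_neg] at this
            exact ⟨j, this⟩
          · exact absurd ⟨j, ⟨α, hα, h⟩⟩ hLx
          · exfalso
            apply hLx
            have := hneg ⟨α, hα, h⟩
            rw [neg_neg] at this
            exact ⟨j, this⟩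
          · exact ⟨j, k, hjk, Or.inl h⟩
          · exact ⟨j, k, hjk, Or.inr (Or.inl h)⟩
          · exact ⟨j, k, hjk, Or.inr (Or.inr (Or.inl h))⟩
          · exact ⟨j, k, hjk, Or.inr (Or.inr (Or.inr h))⟩
        · rintro ⟨j, k, hjk, h | h | h | h⟩
          · rw [h]; exact (hfa j k (ne_of_lt hjk)).2
          · rw [h]; exact hneg (hfa j k (ne_of_lt hjk)).2
          · rw [h]; exact (hfa j k (ne_of_lt hjk)).1
          · rw [h]; exact hneg (hfa j k (ne_of_lt hjk)).1
    · -- Type A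
      have hexc : ∀ j k : Fin r, j ≠ k → mem2 R (ε j - ε k) → mem2 R (ε j + ε k) → False :=
        fun j k hjk h1 h2 => hfull ⟨j, k, hjk, h1, h2⟩
      have hnoSL : ∀ j, ¬ mem2 R (ε j) ∧ ¬ mem2 R ((2:ℝ) • ε j) := by
        intro j
        have hkey : (mem2 R (ε j) ∨ mem2 R ((2:ℝ) • ε j)) → False := by
          intro hm
          have hex : ∃ k : Fin r, k ≠ j := by
            rcases eq_or_ne j z with rfl | hjz
            · exact ⟨o, Ne.symm hzo⟩
            · exact ⟨z, Ne.symm hjz⟩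
          obtain ⟨k, hkj⟩ := hex
          obtain ⟨w, hwW, hwi, hwj, hwo⟩ :=
            flip_ex horth hlen hdual hspan hRiesz hL hR0 hW hm
          rcases hedge j k (Ne.symm hkj) with h | h
          · have key : mem2 R (-(ε j + ε k)) := by
              apply move2i hspan hWR hwW hwi h
              intro m
              rcases eq_or_ne m j with rfl | hmj
              · rw [hwj]
                simp [LinearMap.sub_apply, LinearMap.add_apply, LinearMap.neg_apply,
                  map_neg, hdual, hkj, Ne.symm hkj]
              · rw [hwo m hmj]
                simp [LinearMap.sub_apply, LinearMap.add_apply, LinearMap.neg_apply,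
                  hdual, Ne.symm hmj]
            have key2 := hneg key
            rw [neg_neg] at key2
            exact hexc j k (Ne.symm hkj) h key2
          · have key : mem2 R (-(ε j - ε k)) := by
              apply move2i hspan hWR hwW hwi h
              intro m
              rcases eq_or_ne m j with rfl | hmj
              · rw [hwj]
                simp [LinearMap.sub_apply, LinearMap.add_apply, LinearMap.neg_apply,
                  map_neg, hdual, hkj, Ne.symm hkj]
              · rw [hwo m hmj]
                simp [LinearMap.sub_apply, LinearMap.add_apply, LinearMap.neg_apply,
                  hdual, Ne.symm hmj]
            have key2 := hneg key
            rw [neg_neg] at key2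
            exact hexc j k (Ne.symm hkj) key2 h
        exact ⟨fun h => hkey (Or.inl h), fun h => hkey (Or.inr h)⟩
      have hqsymm : ∀ j k : Fin r, mem2 R (ε j - ε k) → mem2 R (ε k - ε j) := by
        intro j k h
        have := hneg h
        rwa [neg_sub] at this
      have hpsymm : ∀ j k : Fin r, mem2 R (ε j + ε k) → mem2 R (ε k + ε j) := by
        intro j k h
        rwa [add_comm] at h
      set lam : Fin r → ℝ :=
        fun j => if j = z then 1 else if mem2 R (ε z - ε j) then 1 else -1 with hlamdef
      have hlam1 : ∀ i, lam i = 1 ∨ lam i = -1 := by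
        intro i
        rw [hlamdef]
        dsimp only
        split_ifs <;> simp
      have hlamz : lam z = 1 := by
        rw [hlamdef]
        dsimp only
        rw [if_pos rfl]
      have hlamq : ∀ k, k ≠ z → (mem2 R (ε z - ε k) ↔ lam k = 1) := by
        intro k hk
        rw [hlamdef]
        dsimp only
        rw [if_neg hk]
        split_ifs with h
        · exact ⟨fun _ => rfl, fun _ => h⟩
        · exact ⟨fun hh => absurd hh h, fun h1 => absurd h1 (by norm_num)⟩
      have claim : ∀ j k, j ≠ k → (mem2 R (ε j - ε k) ↔ lam j = lam k) := by
        intro j k hjk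
        rcases eq_or_ne j z with rfl | hjz
        · rw [hlamz, eq_comm]
          exact hlamq k (Ne.symm hjk)
        rcases eq_or_ne k z with rfl | hkz
        · rw [hlamz]
          constructor
          · intro h
            exact (hlamq j hjz).mp (hqsymm _ _ h)
          · intro h
            exact hqsymm _ _ ((hlamq j hjz).mpr h)
        · by_cases hqj : mem2 R (ε z - ε j) <;> by_cases hqk : mem2 R (ε z - ε k)
          · have h1 : lam j = 1 := (hlamq j hjz).mp hqj
            have h2 : lam k = 1 := (hlamq k hkz).mp hqk
            rw [h1, h2]
            exact iff_of_true
              (tri1 horth hlen hdual hspan hRiesz hL hR0 hW hWR hjz (Ne.symm hkz) hjk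
                (hqsymm _ _ hqj) hqk) rfl
          · have h1 : lam j = 1 := (hlamq j hjz).mp hqj
            have h2 : lam k = -1 := by
              rcases hlam1 k with h | h
              · exact absurd ((hlamq k hkz).mpr h) hqk
              · exact h
            rw [h1, h2]
            apply iff_of_false
            · intro hq
              exact hqk (tri1 horth hlen hdual hspan hRiesz hL hR0 hW hWR (Ne.symm hjz)
                hjk (Ne.symm hkz) hqj hq)
            · norm_num
          · have h1 : lam j = -1 := by
              rcases hlam1 j with h | h
              · exact absurd ((hlamq j hjz).mpr h) hqj
              · exact h
            have h2 : lam k = 1 := (hlamq k hkz).mp hqk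
            rw [h1, h2]
            apply iff_of_false
            · intro hq
              have hpzj : mem2 R (ε z + ε j) := (hedge z j (Ne.symm hjz)).resolve_left hqj
              have := tri3 horth hlen hdual hspan hRiesz hL hR0 hW hWR (Ne.symm hjz)
                hjk (Ne.symm hkz) hpzj hq
              exact hexc z k (Ne.symm hkz) hqk this
            · norm_num
          · have h1 : lam j = -1 := by
              rcases hlam1 j with h | h
              · exact absurd ((hlamq j hjz).mpr h) hqj
              · exact h
            have h2 : lam k = -1 := by
              rcases hlam1 k with h | h
              · exact absurd ((hlamq k hkz).mpr h) hqk
              · exact h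
            rw [h1, h2]
            have hpzj : mem2 R (ε z + ε j) := (hedge z j (Ne.symm hjz)).resolve_left hqj
            have hpzk : mem2 R (ε z + ε k) := (hedge z k (Ne.symm hkz)).resolve_left hqk
            exact iff_of_true
              (tri4 horth hlen hdual hspan hRiesz hL hR0 hW hWR hjz (Ne.symm hkz) hjk
                (hpsymm _ _ hpzj) hpzk) rfl
      refine ⟨lam, hlam1, Or.inl ?_⟩
      ext ψ
      simp only [himg ψ, setTypeA, Set.mem_setOf_eq]
      constructor
      · rintro ⟨α, hα, rfl⟩
        rcases hRsub α hα with ⟨j, h | h | h | h⟩ | ⟨j, k, hjk, h | h | h | h⟩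
        · exact absurd ⟨α, hα, h⟩ (hnoSL j).1
        · exfalso
          have := hneg ⟨α, hα, h⟩
          rw [neg_neg] at this
          exact (hnoSL j).1 this
        · exact absurd ⟨α, hα, h⟩ (hnoSL j).2
        · exfalso
          have := hneg ⟨α, hα, h⟩
          rw [neg_neg] at this
          exact (hnoSL j).2 this
        · -- 2α = εj + εk
          have hjk' := ne_of_lt hjk
          have hlne : lam j ≠ lam k := fun he =>
            hexc j k hjk' ((claim j k hjk').mpr he) ⟨α, hα, h⟩
          rcases hlam1 j with h1 | h1 <;> rcases hlam1 k with h2 | h2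
          · exact absurd (h1.trans h2.symm) hlne
          · exact ⟨j, k, hjk', by rw [h, h1, h2]; module⟩
          · exact ⟨k, j, Ne.symm hjk', by rw [h, h1, h2]; module⟩
          · exact absurd (h1.trans h2.symm) hlne
        · -- 2α = -(εj + εk)
          have hjk' := ne_of_lt hjk
          have hplus : mem2 R (ε j + ε k) := by
            have := hneg ⟨α, hα, h⟩
            rwa [neg_neg] at this
          have hlne : lam j ≠ lam k := fun he =>
            hexc j k hjk' ((claim j k hjk').mpr he) hplus
          rcases hlam1 j with h1 | h1 <;> rcases hlam1 k with h2 | h2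
          · exact absurd (h1.trans h2.symm) hlne
          · exact ⟨k, j, Ne.symm hjk', by rw [h, h1, h2]; module⟩
          · exact ⟨j, k, hjk', by rw [h, h1, h2]; module⟩
          · exact absurd (h1.trans h2.symm) hlne
        · -- 2α = εj - εk
          have hjk' := ne_of_lt hjk
          have hleq : lam j = lam k := (claim j k hjk').mp ⟨α, hα, h⟩
          rcases hlam1 j with h1 | h1
          · have h2 : lam k = 1 := by rw [← hleq]; exact h1
            exact ⟨j, k, hjk', by rw [h, h1, h2]; module⟩
          · have h2 : lam k = -1 := by rw [← hleq]; exact h1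
            exact ⟨k, j, Ne.symm hjk', by rw [h, h1, h2]; module⟩
        · -- 2α = -(εj - εk)
          have hjk' := ne_of_lt hjk
          have hq : mem2 R (ε j - ε k) := by
            have := hneg ⟨α, hα, h⟩
            rwa [neg_neg] at this
          have hleq : lam j = lam k := (claim j k hjk').mp hq
          rcases hlam1 j with h1 | h1
          · have h2 : lam k = 1 := by rw [← hleq]; exact h1
            exact ⟨k, j, Ne.symm hjk', by rw [h, h1, h2]; module⟩
          · have h2 : lam k = -1 := by rw [← hleq]; exact h1
            exact ⟨j, k, hjk', by rw [h, h1, h2]; module⟩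
      · rintro ⟨a, b, hab, rfl⟩
        rcases hlam1 a with h1 | h1 <;> rcases hlam1 b with h2 | h2 <;> rw [h1, h2]
        · have hq : mem2 R (ε a - ε b) := (claim a b hab).mpr (by rw [h1, h2])
          have heq : (1:ℝ) • ε a - (1:ℝ) • ε b = ε a - ε b := by module
          rw [heq]
          exact hq
        · have hne : lam a ≠ lam b := by
            rw [h1, h2]
            norm_num
          have hnq : ¬ mem2 R (ε a - ε b) := fun hq => hne ((claim a b hab).mp hq)
          have hp := (hedge a b hab).resolve_left hnq
          have heq : (1:ℝ) • ε a - (-1:ℝ) • ε b = ε a + ε b := by module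
          rw [heq]
          exact hp
        · have hne : lam a ≠ lam b := by
            rw [h1, h2]
            norm_num
          have hnq : ¬ mem2 R (ε a - ε b) := fun hq => hne ((claim a b hab).mp hq)
          have hp := (hedge a b hab).resolve_left hnq
          have heq : (-1:ℝ) • ε a - (1:ℝ) • ε b = -(ε a + ε b) := by module
          rw [heq]
          exact hneg hp
        · have hq : mem2 R (ε a - ε b) := (claim a b hab).mpr (by rw [h1, h2])
          have heq : (-1:ℝ) • ε a - (-1:ℝ) • ε b = -(ε a - ε b) := by module
          rw [heq]
          exact hneg hq
end

section
/- Let V be a real inner product space, L > 0, and let ε₁, …, ε_r ∈ V (r ≥ 1) be pairwise orthogonal vectors each of norm 1/L. Let m₁, m₂, m ∈ ℝ, let k₁, …, k_r be integers, and set ω := Σ_{j=1}^r k_jε_j and 2ρ := m₁·Σ_{j=1}^r (1/2)ε_j + m₂·Σ_{j=1}^r ε_j + m·Σ_{1 ≤ j < k ≤ r} ((1/2)(ε_j + ε_k) + (1/2)(ε_j − ε_k)). Then 4π²·⟨ω + 2ρ, ω⟩ = (4π²/L²)·Σ_{j=1}^r k_j·(k_j + m₁/2 + m₂ + m·(r −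 j)). -/
/-!
Since (1/2)(ε_j + ε_l) + (1/2)(ε_j - ε_l) = ε_j, each ε_j occurs r - (j + 1) times in the
m-part of 2ρ, so ω + 2ρ = Σ_j c_j ε_j with c_j the bracket on the right. By orthogonality the
inner product with ω = Σ_j k_j ε_j is diagonal, and ⟨ε_j, ε_j⟩ = 1/L².
-/

open scoped RealInnerProductSpace

open Finset

theorem inner_sum_smul_sum_smul_of_pairwise_inner_eq_zero {V ι : Type*}
    [NormedAddCommGroup V] [InnerProductSpace ℝ V] [Fintype ι] {v : ι → V}
    (hv : ∀ i j, i ≠ j → ⟪v i, v j⟫ = 0) (a b : ι → ℝ) :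
    ⟪∑ i, a i • v i, ∑ i, b i • v i⟫ = ∑ i, a i * b i * ‖v i‖ ^ 2 := by
  simp only [sum_inner, inner_sum, real_inner_smul_left, real_inner_smul_right]
  refine sum_congr rfl fun i _ => ?_
  rw [sum_eq_single i (fun j _ hji => by rw [hv j i hji, mul_zero, mul_zero])
    (fun h => absurd (mem_univ i) h), real_inner_self_eq_norm_sq]
  ring

theorem inv_two_smul_add_add_inv_two_smul_sub {K M : Type*} [Field K] [CharZero K]
    [AddCommGroup M] [Module K M] (x y : M) :
    (2⁻¹ : K) • (x + y) + (2⁻¹ : K) • (x - y) = x := by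
  module

theorem Fin.sum_ite_lt_eq_nsmul {M : Type*} [AddCommMonoid M] {r : ℕ} (j : Fin r) (x : M) :
    (∑ l : Fin r, if j < l then x else 0) = (r - 1 - j) • x := by
  rw [← sum_filter, filter_lt_eq_Ioi, Finset.sum_const, Fin.card_Ioi]

theorem Fin.cast_sub_one_sub {R : Type*} [Ring R] {r : ℕ} (j : Fin r) :
    ((r - 1 - j : ℕ) : R) = r - ((j : ℕ) + 1) := by
  rw [Nat.sub_sub, add_comm, Nat.cast_sub (by omega), Nat.cast_add, Nat.cast_one]

theorem Fin.sum_sum_ite_lt_eq_sum_smul (R : Type*) {M : Type*} [Ring R] [AddCommGroup M]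
    [Module R M] {r : ℕ} (f : Fin r → M) :
    (∑ j : Fin r, ∑ l : Fin r, if j < l then f j else 0) =
      ∑ j : Fin r, ((r : R) - ((j : ℕ) + 1)) • f j := by
  refine sum_congr rfl fun j _ => ?_
  rw [Fin.sum_ite_lt_eq_nsmul, ← Nat.cast_smul_eq_nsmul R, Fin.cast_sub_one_sub]

theorem stmt13_general {V : Type*} [NormedAddCommGroup V] [InnerProductSpace ℝ V]
    {r : ℕ} (L : ℝ)
    (ε : Fin r → V) (horth : ∀ i j, i ≠ j → ⟪ε i, ε j⟫ = 0)
    (hnorm : ∀ j, ‖ε j‖ = 1 / L)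
    (m₁ m₂ m : ℝ) (k : Fin r → ℤ) (ω ρ2 : V)
    (hω : ω = ∑ j, (k j : ℝ) • ε j)
    (hρ : ρ2 = m₁ • (∑ j, (2⁻¹ : ℝ) • ε j) + m₂ • (∑ j, ε j) +
      m • (∑ j : Fin r, ∑ l : Fin r, if j < l then
        ((2⁻¹ : ℝ) • (ε j + ε l) + (2⁻¹ : ℝ) • (ε j - ε l)) else 0)) :
    4 * Real.pi ^ 2 * ⟪ω + ρ2, ω⟫ =
      (4 * Real.pi ^ 2 / L ^ 2) *
        ∑ j : Fin r, (k j : ℝ) *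
          ((k j : ℝ) + m₁ / 2 + m₂ + m * ((r : ℝ) - (((j : ℕ) : ℝ) + 1))) := by
  have hsum : ω + ρ2 =
      ∑ j, ((k j : ℝ) + m₁ / 2 + m₂ + m * ((r : ℝ) - (((j : ℕ) : ℝ) + 1))) • ε j := by
    simp only [hω, hρ, inv_two_smul_add_add_inv_two_smul_sub, Fin.sum_sum_ite_lt_eq_sum_smul ℝ,
      smul_sum, ← sum_add_distrib]
    exact sum_congr rfl fun j _ => by module
  rw [hsum, hω, inner_sum_smul_sum_smul_of_pairwise_inner_eq_zero horth, mul_sum, mul_sum]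
  refine sum_congr rfl fun j _ => ?_
  rw [hnorm, div_pow, one_pow]
  ring

theorem stmt13 {V : Type*} [NormedAddCommGroup V] [InnerProductSpace ℝ V]
    {r : ℕ} (hr : 1 ≤ r) (L : ℝ) (hL : 0 < L)
    (ε : Fin r → V) (horth : ∀ i j, i ≠ j → ⟪ε i, ε j⟫ = 0)
    (hnorm : ∀ j, ‖ε j‖ = 1 / L)
    (m₁ m₂ m : ℝ) (k : Fin r → ℤ) (ω ρ2 : V)
    (hω : ω = ∑ j, (k j : ℝ) • ε j)
    (hρ : ρ2 = m₁ • (∑ j, (2⁻¹ : ℝ) • ε j) + m₂ • (∑ j, ε j) +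
      m • (∑ j : Fin r, ∑ l : Fin r, if j < l then
        ((2⁻¹ : ℝ) • (ε j + ε l) + (2⁻¹ : ℝ) • (ε j - ε l)) else 0)) :
    4 * Real.pi ^ 2 * ⟪ω + ρ2, ω⟫ =
      (4 * Real.pi ^ 2 / L ^ 2) *
        ∑ j : Fin r, (k j : ℝ) *
          ((k j : ℝ) + m₁ / 2 + m₂ + m * ((r : ℝ) - (((j : ℕ) : ℝ) + 1))) :=
  stmt13_general L ε horth hnorm m₁ m₂ m k ω ρ2 hω hρ
end

section
/- Let r ≥ 2 and let m ≥ 1 be an integer. Then the following two statements are equivalent: (i) for all integers k₁ ≥ k₂ ≥ … ≥ k_r, not all zero, one has Σ_{j=1}^r k_j·(k_j + (m/2)·(r − 2j + 1)) ≥ 1 + (m/2)·(r − 1); (ii) m ≤ 2. -/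
/-!
Write `c = m / 2` and `ω = (k₁, …, k_r)`. The normalized eigenvalue is `|ω|² + c · T(ω)` with
`T(ω) = ∑ k_j (r - 2j + 1)`. Testing `ω = (1, …, 1)`, for which `T = 0`, gives `r ≥ 1 + c (r - 1)`,
i.e. `c ≤ 1`. Conversely, for `c ≤ 1`: a constant nonzero `ω` has eigenvalue `r k₁² ≥ r`; otherwise
`|ω|² ≥ 1`, and summation by parts shows `T(ω) ≥ (r - 1)(k₁ - k_r) ≥ r - 1`.
-/

open Finset

/-- `rhoPairing r k = ⟨ω, 2ρ⟩ / m` for `ω = ∑ k (j - 1) ε_j`; indices start at `0` here. -/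
noncomputable def rhoPairing (n : ℕ) (k : ℕ → ℝ) : ℝ :=
  ∑ j ∈ range n, k j * ((n : ℝ) - 2 * j - 1)

lemma rhoPairing_succ (n : ℕ) (k : ℕ → ℝ) :
    rhoPairing (n + 1) k = rhoPairing n k + ∑ j ∈ range n, (k j - k n) := by
  have hshift : ∀ j ∈ range n, k j * (((n + 1 : ℕ) : ℝ) - 2 * j - 1)
      = k j * ((n : ℝ) - 2 * j - 1) + k j := fun j _ => by push_cast; ring
  rw [rhoPairing, sum_range_succ, sum_congr rfl hshift, sum_add_distrib, sum_sub_distrib,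
    sum_const, card_range, nsmul_eq_mul, rhoPairing]
  push_cast
  ring

@[simp]
lemma rhoPairing_const (n : ℕ) (a : ℝ) : rhoPairing n (fun _ => a) = 0 := by
  induction n with
  | zero => simp [rhoPairing]
  | succ n ih => simp [rhoPairing_succ, ih]

lemma mul_sub_le_rhoPairing {k : ℕ → ℝ} (hk : Antitone k) (n : ℕ) :
    n * (k 0 - k n) ≤ rhoPairing (n + 1) k := by
  induction n with
  | zero => simp [rhoPairing]
  | succ n ih =>
    have hlast : n * (k n - k (n + 1)) ≤ ∑ j ∈ range n, (k (j + 1) - k (n + 1)) := by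
      simpa using card_nsmul_le_sum (range n) (fun j => k (j + 1) - k (n + 1)) _
        fun j hj => sub_le_sub_right (hk (mem_range.mp hj)) _
    rw [rhoPairing_succ, sum_range_succ']
    push_cast
    linarith

lemma antitone_comp_clamp {α : Type*} [Preorder α] {n : ℕ} {k : Fin (n + 1) → α}
    (hk : Antitone k) : Antitone fun i => k (Fin.clamp i n) :=
  fun _ _ h => hk (Fin.mk_le_mk.mpr (min_le_min_right n h))

lemma Fin.clamp_val {n : ℕ} (j : Fin (n + 1)) : Fin.clamp j n = j :=
  Fin.ext (min_eq_left (Nat.lt_succ_iff.mp j.isLt))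

lemma sum_mul_add_eq_sum_sq_add_rhoPairing {n : ℕ} (c : ℝ) (k : Fin (n + 1) → ℝ) :
    ∑ j : Fin (n + 1), k j * (k j + c * (((n + 1 : ℕ) : ℝ) - 2 * (((j : ℕ) : ℝ) + 1) + 1))
      = ∑ j, k j ^ 2 + c * rhoPairing (n + 1) fun i => k (Fin.clamp i n) := by
  rw [rhoPairing, ← Fin.sum_univ_eq_sum_range (fun i => k (Fin.clamp i n) * _), mul_sum,
    ← sum_add_distrib]
  refine sum_congr rfl fun j _ => ?_
  rw [Fin.clamp_val]
  ring

lemma one_le_intCast_sq {z : ℤ} (hz : z ≠ 0) : 1 ≤ (z : ℝ) ^ 2 :=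
  mod_cast (one_le_sq_iff_one_le_abs _).mpr (Int.one_le_abs hz)

lemma card_le_sum_sq_of_forall_ne_zero {ι : Type*} [Fintype ι] {k : ι → ℤ}
    (h : ∀ j, k j ≠ 0) : Fintype.card ι ≤ ∑ j, (k j : ℝ) ^ 2 := by
  simpa using card_nsmul_le_sum univ (fun j => (k j : ℝ) ^ 2) 1
    fun j _ => one_le_intCast_sq (h j)

lemma one_le_sum_sq_of_ne_zero {ι : Type*} [Fintype ι] {k : ι → ℤ} (h : ∃ j, k j ≠ 0) :
    1 ≤ ∑ j, (k j : ℝ) ^ 2 := by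
  obtain ⟨j, hj⟩ := h
  calc (1 : ℝ) ≤ (k j : ℝ) ^ 2 := one_le_intCast_sq hj
    _ ≤ ∑ j, (k j : ℝ) ^ 2 :=
      single_le_sum (f := fun j => (k j : ℝ) ^ 2) (fun j _ => sq_nonneg _) (mem_univ j)

lemma one_add_mul_le_sum_sq_add_mul_rhoPairing {s : ℕ} {c : ℝ} (hc₀ : 0 ≤ c) (hc₁ : c ≤ 1)
    {k : Fin (s + 1) → ℤ} (hk : Antitone k) (hne : ∃ j, k j ≠ 0) :
    1 + c * s ≤ ∑ j, (k j : ℝ) ^ 2 + c * rhoPairing (s + 1) fun i => (k (Fin.clamp i s) : ℝ) := by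
  by_cases hconst : k 0 = k (Fin.last s)
  · have hall : ∀ j, k j = k 0 := fun j =>
      le_antisymm (hk (Fin.zero_le j)) (hconst ▸ hk (Fin.le_last j))
    have hk₀ : k 0 ≠ 0 := by
      obtain ⟨j, hj⟩ := hne
      rwa [← hall j]
    have hQ := card_le_sum_sq_of_forall_ne_zero fun j => hall j ▸ hk₀
    simp only [hall, rhoPairing_const, Fintype.card_fin] at hQ ⊢
    push_cast at hQ
    nlinarith
  · have hdrop : (1 : ℝ) ≤ k 0 - k (Fin.last s) := by
      have := lt_of_le_of_ne (hk (Fin.zero_le _)) (Ne.symm hconst)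
      exact_mod_cast (by omega : 1 ≤ k 0 - k (Fin.last s))
    have hT := mul_sub_le_rhoPairing (k := fun i => (k (Fin.clamp i s) : ℝ))
      (Int.cast_mono.comp_antitone (antitone_comp_clamp hk)) s
    rw [show Fin.clamp 0 s = 0 from Fin.clamp_val 0,
      show Fin.clamp s s = Fin.last s from Fin.clamp_val (Fin.last s)] at hT
    have hsT : (s : ℝ) ≤ _ := le_trans (le_mul_of_one_le_right (by positivity) hdrop) hT
    exact add_le_add (one_le_sum_sq_of_ne_zero hne) (mul_le_mul_of_nonneg_left hsT hc₀)

theorem stmt14 {r : ℕ} (hr : 2 ≤ r) (m : ℤ) (hm : 1 ≤ m) :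
    (∀ k : Fin r → ℤ, (∀ i j : Fin r, i ≤ j → k j ≤ k i) → (∃ j, k j ≠ 0) →
      (1 : ℝ) + ((m : ℝ) / 2) * ((r : ℝ) - 1) ≤
        ∑ j : Fin r, (k j : ℝ) *
          ((k j : ℝ) + ((m : ℝ) / 2) * ((r : ℝ) - 2 * (((j : ℕ) : ℝ) + 1) + 1))) ↔
    m ≤ 2 := by
  obtain ⟨s, rfl⟩ : ∃ s, r = s + 1 := ⟨r - 1, by omega⟩
  have hs : (1 : ℝ) ≤ s := by exact_mod_cast (by omega : 1 ≤ s)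
  have hm' : (1 : ℝ) ≤ m := by exact_mod_cast hm
  have hsum (k : Fin (s + 1) → ℤ) := sum_mul_add_eq_sum_sq_add_rhoPairing ((m : ℝ) / 2)
    fun j => (k j : ℝ)
  simp only [hsum]
  push_cast
  constructor
  · intro H
    have hones := H (fun _ => 1) (fun _ _ _ => le_rfl) ⟨0, one_ne_zero⟩
    simp only [Int.cast_one, one_pow, sum_const, card_univ, Fintype.card_fin, nsmul_eq_mul,
      mul_one, rhoPairing_const] at hones
    push_cast at hones
    have : (m : ℝ) ≤ 2 := by nlinarith
    exact_mod_cast this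
  · intro hm2 k hk hne
    have hm2' : (m : ℝ) ≤ 2 := by exact_mod_cast hm2
    simpa using one_add_mul_le_sum_sq_add_mul_rhoPairing (c := (m : ℝ) / 2) (by linarith)
      (by linarith) (fun i j hij => hk i j hij) hne
end

section
/- Let m₊ ≥ m₋ ≥ 1 be integers. Then the following two statements are equivalent: (i) for all integers k₁, k₂ with k₁ ≥ |k₂| and (k₁, k₂) ≠ (0, 0), one has k₁·(k₁ + (m₊ + m₋)/2) + k₂·(k₂ + (m₊ − m₋)/2) ≥ 1 + (m₊ + m₋)/2; (ii) m₊ − m₋ ≤ 2. -/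
theorem stmt15 (mp mm : ℤ) (h1 : 1 ≤ mm) (h2 : mm ≤ mp) :
    (∀ k₁ k₂ : ℤ, |k₂| ≤ k₁ → ¬(k₁ = 0 ∧ k₂ = 0) →
      (1 : ℝ) + ((mp : ℝ) + (mm : ℝ)) / 2 ≤
        (k₁ : ℝ) * ((k₁ : ℝ) + ((mp : ℝ) + (mm : ℝ)) / 2) +
        (k₂ : ℝ) * ((k₂ : ℝ) + ((mp : ℝ) - (mm : ℝ)) / 2)) ↔
    mp - mm ≤ 2 := by
  constructor
  · intro h
    have H := h 1 (-1) (by norm_num) (by norm_num)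
    push_cast at H
    have : (mp : ℝ) - mm ≤ 2 := by linarith
    exact_mod_cast this
  · intro hd k₁ k₂ hk hne
    rw [abs_le] at hk
    obtain ⟨hk1, hk2⟩ := hk
    have hne' : k₁ ≠ 0 ∨ k₂ ≠ 0 := by tauto
    have hx : 1 ≤ k₁ := by omega
    have hX : (1 : ℝ) ≤ (k₁ : ℝ) := by exact_mod_cast hx
    have hY1 : -(k₁ : ℝ) ≤ (k₂ : ℝ) := by exact_mod_cast hk1
    have hY2 : (k₂ : ℝ) ≤ (k₁ : ℝ) := by exact_mod_cast hk2
    have hD : (mp : ℝ) - mm ≤ 2 := by exact_mod_cast hd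
    have hM : (1 : ℝ) ≤ (mm : ℝ) := by exact_mod_cast h1
    have hP : (mm : ℝ) ≤ (mp : ℝ) := by exact_mod_cast h2
    rcases le_or_gt 0 k₂ with hy | hy
    · have hY0 : (0 : ℝ) ≤ (k₂ : ℝ) := by exact_mod_cast hy
      nlinarith [mul_nonneg (by linarith : (0:ℝ) ≤ (k₁:ℝ) - 1) (by linarith : (0:ℝ) ≤ (mp:ℝ) + mm),
        mul_nonneg hY0 (by linarith : (0:ℝ) ≤ (mp:ℝ) - mm),
        mul_self_nonneg ((k₂:ℝ))]
    · have hy1 : k₂ ≤ -1 := by omega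
      have hY3 : (k₂ : ℝ) ≤ -1 := by exact_mod_cast hy1
      nlinarith [mul_nonneg (by linarith : (0:ℝ) ≤ (k₁:ℝ) - 1) (by linarith : (0:ℝ) ≤ (mp:ℝ) + mm - 2),
        mul_nonneg (by linarith : (0:ℝ) ≤ -(k₂:ℝ)) (by linarith : (0:ℝ) ≤ 2 - ((mp:ℝ) - mm)),
        mul_nonneg (by linarith : (0:ℝ) ≤ -(k₂:ℝ) - 1) (by linarith : (0:ℝ) ≤ -(k₂:ℝ)),
        mul_nonneg (by linarith : (0:ℝ) ≤ (k₁:ℝ) - 1) (by linarith : (0:ℝ) ≤ (k₁:ℝ) + 1)]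
end

section
/- Suppose Γ¹ and Γ² are additive subgroups of V such that Γ¹ + Γ² = Γ and ⟨x, y⟩ = 0 for every x ∈ Γ¹ and y ∈ Γ². Then every basis vector e_j lies in Γ¹ ∪ Γ². -/
/-!
Write `e j = x + y` with `x ∈ Γ₁`, `y ∈ Γ₂`, and `x = ∑ mᵢ • eᵢ` with `mᵢ ∈ ℤ`. Orthogonality of the
basis gives `0 = ⟪x, y⟫ = ∑ mᵢ (δᵢⱼ - mᵢ) ‖eᵢ‖²`, and since the `mᵢ` are integers every term is
`≤ 0`. Hence all terms vanish: `mᵢ = 0` for `i ≠ j` and `mⱼ ∈ {0, 1}`, i.e. `x = 0` or `x = e j`.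
-/

open scoped RealInnerProductSpace

open Finset

theorem Int.mul_sub_nonpos_of_nonneg_of_le_one {m k : ℤ} (hk₀ : 0 ≤ k) (hk₁ : k ≤ 1) :
    m * (k - m) ≤ 0 := by
  rcases le_or_gt m 0 with hm | hm
  · exact mul_nonpos_of_nonpos_of_nonneg hm (by omega)
  · exact mul_nonpos_of_nonneg_of_nonpos hm.le (by omega)

section

variable {V : Type*} [NormedAddCommGroup V] [InnerProductSpace ℝ V] {ι : Type*} [Fintype ι]
  {e : ι → V}

theorem inner_sum_smul_sum_smul_of_pairwise_inner_eq_zero_s17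
    (horth : Pairwise fun i j => ⟪e i, e j⟫ = 0) (a b : ι → ℝ) :
    ⟪∑ i, a i • e i, ∑ i, b i • e i⟫ = ∑ i, a i * b i * ‖e i‖ ^ 2 := by
  simp_rw [sum_inner, inner_sum, real_inner_smul_left, real_inner_smul_right]
  refine sum_congr rfl fun i _ => ?_
  rw [Fintype.sum_eq_single i fun k hk => by rw [horth hk.symm, mul_zero, mul_zero],
    real_inner_self_eq_norm_sq]
  ring

theorem eq_zero_or_eq_of_mem_closure_range_of_inner_sub_eq_zero (he₀ : ∀ i, e i ≠ 0)
    (horth : Pairwise fun i j => ⟪e i, e j⟫ = 0) {x : V}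
    (hx : x ∈ AddSubgroup.closure (Set.range e)) (j : ι) (hxj : ⟪x, e j - x⟫ = 0) :
    x = 0 ∨ x = e j := by
  classical
  obtain ⟨m, rfl⟩ := AddSubgroup.exists_of_mem_closure_range e _ hx
  set δ : ι → ℤ := Pi.single j 1
  have hej : e j = ∑ i, (δ i : ℝ) • e i := by
    rw [Fintype.sum_eq_single j fun i hi => by simp [δ, hi]]
    simp [δ]
  have hsum : ∑ i, ((m i * (δ i - m i) : ℤ) : ℝ) * ‖e i‖ ^ 2 = 0 := by
    rw [← hxj, hej]
    simp_rw [← Int.cast_smul_eq_zsmul ℝ, ← sum_sub_distrib, ← sub_smul,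
      inner_sum_smul_sum_smul_of_pairwise_inner_eq_zero_s17 horth]
    push_cast
    rfl
  have hδ : ∀ i, 0 ≤ δ i ∧ δ i ≤ 1 := fun i => by
    by_cases hi : i = j <;> simp [δ, hi]
  have hterm : ∀ i, m i * (δ i - m i) = 0 := by
    have hnonpos : ∀ i ∈ univ, ((m i * (δ i - m i) : ℤ) : ℝ) * ‖e i‖ ^ 2 ≤ 0 := fun i _ =>
      mul_nonpos_of_nonpos_of_nonneg
        (mod_cast Int.mul_sub_nonpos_of_nonneg_of_le_one (hδ i).1 (hδ i).2) (sq_nonneg _)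
    intro i
    have h := (sum_eq_zero_iff_of_nonpos hnonpos).1 hsum i (mem_univ i)
    rw [mul_eq_zero, or_iff_left (pow_ne_zero 2 (norm_ne_zero_iff.2 (he₀ i)))] at h
    exact_mod_cast h
  have hm : ∀ i, i ≠ j → m i = 0 := fun i hi => by simpa [δ, hi] using hterm i
  have hmj : m j = 0 ∨ m j = 1 := by
    have h := hterm j
    simp only [δ, Pi.single_eq_same, mul_eq_zero] at h
    omega
  rw [Fintype.sum_eq_single j fun i hi => by rw [hm i hi, zero_smul]]
  rcases hmj with h | h <;> simp [h]

end

theorem stmt17_general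
    {V : Type*} [NormedAddCommGroup V] [InnerProductSpace ℝ V]
    {r : ℕ}
    (e : Fin r → V) (he0 : ∀ i, e i ≠ 0)
    (horth : ∀ i j, i ≠ j → ⟪e i, e j⟫ = 0)
    (Γ Γ₁ Γ₂ : AddSubgroup V) (hΓ : Γ = AddSubgroup.closure (Set.range e))
    (hsum : Γ₁ ⊔ Γ₂ = Γ)
    (horth12 : ∀ x ∈ Γ₁, ∀ y ∈ Γ₂, ⟪x, y⟫ = 0) :
    ∀ j : Fin r, e j ∈ Γ₁ ∨ e j ∈ Γ₂ := by
  intro j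
  have hej : e j ∈ Γ₁ ⊔ Γ₂ := hsum ▸ hΓ ▸ AddSubgroup.subset_closure (Set.mem_range_self j)
  obtain ⟨x, hx, y, hy, hxy⟩ := AddSubgroup.mem_sup.1 hej
  obtain rfl : y = e j - x := eq_sub_of_add_eq' hxy
  have hxΓ : x ∈ AddSubgroup.closure (Set.range e) := hΓ ▸ hsum ▸ AddSubgroup.mem_sup_left hx
  rcases eq_zero_or_eq_of_mem_closure_range_of_inner_sub_eq_zero he0 horth hxΓ j
      (horth12 x hx _ hy) with rfl | rfl
  · exact Or.inr (by simpa using hy)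
  · exact Or.inl hx

theorem stmt17
    {V : Type*} [NormedAddCommGroup V] [InnerProductSpace ℝ V] [FiniteDimensional ℝ V]
    {r : ℕ} (hr : 1 ≤ r) (hdim : Module.finrank ℝ V = r)
    (e : Fin r → V) (he0 : ∀ i, e i ≠ 0)
    (horth : ∀ i j, i ≠ j → ⟪e i, e j⟫ = 0)
    (hspan : Submodule.span ℝ (Set.range e) = ⊤)
    (Γ Γ₁ Γ₂ : AddSubgroup V) (hΓ : Γ = AddSubgroup.closure (Set.range e))
    (hsum : Γ₁ ⊔ Γ₂ = Γ)
    (horth12 : ∀ x ∈ Γ₁, ∀ y ∈ Γ₂, ⟪x, y⟫ = 0) :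
    ∀ j : Fin r, e j ∈ Γ₁ ∨ e j ∈ Γ₂ :=
  stmt17_general e he0 horth Γ Γ₁ Γ₂ hΓ hsum horth12
end
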